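/- arXiv:2507.18872 — 10 statements merged into one kernel-verified Lean document; each statement's English description precedes it below -/
import Mathlib

section
/- The 5×5 real symmetric tridiagonal matrix with zero diagonal and off-diagonal entries (J₁, J₂, J₂, J₁), with J₁, J₂ > 0, has eigenvalues 0, ±J₁, ±√(J₁² + 2J₂²). -/
open Matrix

/-! Expanding `det (μ - H)` along the first row gives the characteristic polynomial
`μ (μ² - J₁²) (μ² - (J₁² + 2 J₂²))`, whose roots are the claimed eigenvalues. -/

lemma eval_charpoly_tridiagonal (J1 J2 μ : ℝ) :
    (!![0, J1, 0, 0, 0; J1, 0, J2, 0, 0; 0, J2, 0, J2, 0;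
        0, 0, J2, 0, J1; 0, 0, 0, J1, 0] : Matrix (Fin 5) (Fin 5) ℝ).charpoly.eval μ =
      μ * (μ ^ 2 - J1 ^ 2) * (μ ^ 2 - (J1 ^ 2 + 2 * J2 ^ 2)) := by
  have hsub : scalar (Fin 5) μ - !![0, J1, 0, 0, 0; J1, 0, J2, 0, 0; 0, J2, 0, J2, 0;
      0, 0, J2, 0, J1; 0, 0, 0, J1, 0] = !![μ, -J1, 0, 0, 0; -J1, μ, -J2, 0, 0;
      0, -J2, μ, -J2, 0; 0, 0, -J2, μ, -J1; 0, 0, 0, -J1, μ] := by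
    ext i j
    fin_cases i <;> fin_cases j <;> simp
  rw [eval_charpoly, hsub]
  simp [det_succ_row_zero, Fin.sum_univ_succ, Fin.succAbove]
  ring

lemma mul_sq_sub_sq_mul_sq_sub_sq_eq_zero_iff {R : Type*} [CommRing R] [NoZeroDivisors R]
    (a b x : R) :
    x * (x ^ 2 - a ^ 2) * (x ^ 2 - b ^ 2) = 0 ↔ x ∈ ({0, a, -a, b, -b} : Set R) := by
  simp only [mul_eq_zero, sub_eq_zero, sq_eq_sq_iff_eq_or_eq_neg, Set.mem_insert_iff,
    Set.mem_singleton_iff, or_assoc]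

theorem stmt1_general (J1 J2 : ℝ)
    (H : Matrix (Fin 5) (Fin 5) ℝ)
    (hH : H = !![0, J1, 0, 0, 0; J1, 0, J2, 0, 0; 0, J2, 0, J2, 0;
                 0, 0, J2, 0, J1; 0, 0, 0, J1, 0]) :
    spectrum ℝ H =
      {0, J1, -J1, Real.sqrt (J1^2 + 2*J2^2), -Real.sqrt (J1^2 + 2*J2^2)} := by
  ext μ
  have hsqrt : Real.sqrt (J1 ^ 2 + 2 * J2 ^ 2) ^ 2 = J1 ^ 2 + 2 * J2 ^ 2 :=
    Real.sq_sqrt (by positivity)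
  rw [← mul_sq_sub_sq_mul_sq_sub_sq_eq_zero_iff, hsqrt, ← eval_charpoly_tridiagonal, ← hH,
    mem_spectrum_iff_isRoot_charpoly, Polynomial.IsRoot.def]

/-- The 5×5 real symmetric tridiagonal matrix with zero diagonal and off-diagonal
entries `(J₁, J₂, J₂, J₁)`, with `J₁, J₂ > 0`, has eigenvalues `0, ±J₁, ±√(J₁² + 2J₂²)`. -/
theorem stmt1 (J1 J2 : ℝ) (hJ1 : 0 < J1) (hJ2 : 0 < J2)
    (H : Matrix (Fin 5) (Fin 5) ℝ)
    (hH : H = !![0, J1, 0, 0, 0; J1, 0, J2, 0, 0; 0, J2, 0, J2, 0;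
                 0, 0, J2, 0, J1; 0, 0, 0, J1, 0]) :
    spectrum ℝ H =
      {0, J1, -J1, Real.sqrt (J1^2 + 2*J2^2), -Real.sqrt (J1^2 + 2*J2^2)} :=
  stmt1_general J1 J2 H hH
end

section
/- Suppose the 4×4 symmetric tridiagonal matrix H with zero diagonal and couplings (J₁, J₂, J₁), J₁, J₂ > 0, exhibits perfect state transfer at time t₀ > 0, i.e., |⟨4| e^{-iHt₀} |1⟩| = 1. Then J₁² ≥ (3π²)/(4t₀²), i.e., J₁ ≥ (π√3)/(2t₀). -/
/-!
Write `J₁ = a b` and `J₂ = a² - b²`. Then `H` has eigenvalues `±a², ±b²` with pairwise orthogonal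
eigenvectors of equal length, and `⟨4| e^{-iHt} |1⟩ = i (a² sin (b² t) - b² sin (a² t)) / (a² + b²)`.
Modulus one forces `sin (a² t) = -sin (b² t) = ±1`, so `(a² + b²) t` is an even and `(a² - b²) t` an
odd multiple of `π`. Hence `4 J₁² t² = ((a² + b²) t)² - ((a² - b²) t)² = π² (4k - 1)` for an
integer `k`, which must be at least `1`.
-/

open Matrix Real NormedSpace

theorem Matrix.exp_eq_smul_mul_transpose_of_transpose_mul_self
    {ι 𝕂 : Type*} [Fintype ι] [DecidableEq ι] [NormedField 𝕂] [NormedAlgebra ℚ 𝕂]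
    [CompleteSpace 𝕂] {A P : Matrix ι ι 𝕂} {c : 𝕂} (d : ι → 𝕂) (hc : c ≠ 0)
    (hP : Pᵀ * P = c • 1) (hAP : A * P = P * diagonal d) :
    exp A = c⁻¹ • (P * diagonal (fun k => exp (d k)) * Pᵀ) := by
  have hQP : (c⁻¹ • Pᵀ) * P = 1 := by
    rw [smul_mul, hP, smul_smul, inv_mul_cancel₀ hc, one_smul]
  let U : (Matrix ι ι 𝕂)ˣ := ⟨P, c⁻¹ • Pᵀ, mul_eq_one_comm.mp hQP, hQP⟩
  have hA : A = U * diagonal d * (↑U⁻¹ : Matrix ι ι 𝕂) := by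
    change A = P * diagonal d * (c⁻¹ • Pᵀ)
    rw [← hAP, Matrix.mul_assoc, mul_eq_one_comm.mp hQP, Matrix.mul_one]
  rw [hA, Matrix.exp_units_conj, Matrix.exp_diagonal]
  change P * diagonal (exp d) * (c⁻¹ • Pᵀ) = _
  rw [Matrix.mul_smul, Pi.exp_def]

def mirrorChain4 {R : Type*} [Zero R] (J₁ J₂ : R) : Matrix (Fin 4) (Fin 4) R :=
  !![0, J₁, 0, 0; J₁, 0, J₂, 0; 0, J₂, 0, J₁; 0, 0, J₁, 0]

def mirrorChain4Eigenbasis {R : Type*} [Neg R] (a b : R) : Matrix (Fin 4) (Fin 4) R :=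
  !![b, a, a, b; a, -b, b, -a; a, -b, -b, a; b, a, -a, -b]

section Eigenbasis

variable {R : Type*} [CommRing R] (a b : R)

theorem mirrorChain4Eigenbasis_transpose_mul_self :
    (mirrorChain4Eigenbasis a b)ᵀ * mirrorChain4Eigenbasis a b = (2 * (a ^ 2 + b ^ 2)) • 1 := by
  ext i j
  fin_cases i <;> fin_cases j <;>
    simp [mirrorChain4Eigenbasis, mul_apply, Fin.sum_univ_four, one_apply] <;> ring

theorem mirrorChain4_mul_eigenbasis :
    mirrorChain4 (a * b) (a ^ 2 - b ^ 2) * mirrorChain4Eigenbasis a b =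
      mirrorChain4Eigenbasis a b * diagonal ![a ^ 2, -b ^ 2, b ^ 2, -a ^ 2] := by
  ext i j
  fin_cases i <;> fin_cases j <;>
    simp [mirrorChain4, mirrorChain4Eigenbasis, mul_apply, Fin.sum_univ_four] <;> ring

end Eigenbasis

theorem exp_smul_mirrorChain4_apply_three_zero (a b t : ℝ) (hab : a ^ 2 + b ^ 2 ≠ 0) :
    exp ((-(Complex.I * t)) • mirrorChain4 ((a * b : ℝ) : ℂ) ((a ^ 2 - b ^ 2 : ℝ) : ℂ)) 3 0 =
      (((a ^ 2 * sin (b ^ 2 * t) - b ^ 2 * sin (a ^ 2 * t)) / (a ^ 2 + b ^ 2) : ℝ) : ℂ) *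
        Complex.I := by
  have hc : 2 * ((a : ℂ) ^ 2 + (b : ℂ) ^ 2) ≠ 0 := by
    exact_mod_cast mul_ne_zero two_ne_zero hab
  have hAP : ((-(Complex.I * t)) • mirrorChain4 ((a * b : ℝ) : ℂ) ((a ^ 2 - b ^ 2 : ℝ) : ℂ)) *
      mirrorChain4Eigenbasis (a : ℂ) b = mirrorChain4Eigenbasis (a : ℂ) b *
        diagonal ((-(Complex.I * t)) • ![(a : ℂ) ^ 2, -b ^ 2, b ^ 2, -a ^ 2]) := by
    push_cast
    rw [smul_mul, mirrorChain4_mul_eigenbasis, diagonal_smul, Matrix.mul_smul]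
  rw [exp_eq_smul_mul_transpose_of_transpose_mul_self _ hc
    (mirrorChain4Eigenbasis_transpose_mul_self _ _) hAP]
  simp only [Matrix.smul_apply, mul_apply, transpose_apply, Fin.sum_univ_four,
    mirrorChain4Eigenbasis, Pi.smul_apply, smul_eq_mul]
  simp
  rw [← Complex.exp_eq_exp_ℂ, Complex.sin, Complex.sin]
  field_simp
  ring_nf
  simp only [Complex.I_sq]
  ring_nf

theorem exists_mul_eq_and_sq_sub_sq_eq {J₁ : ℝ} (J₂ : ℝ) (hJ₁ : J₁ ≠ 0) :
    ∃ a b : ℝ, a * b = J₁ ∧ a ^ 2 - b ^ 2 = J₂ := by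
  set μ := (J₂ + √(J₂ ^ 2 + 4 * J₁ ^ 2)) / 2
  have hsq : √(J₂ ^ 2 + 4 * J₁ ^ 2) ^ 2 = J₂ ^ 2 + 4 * J₁ ^ 2 := sq_sqrt (by positivity)
  have hμ : 0 < μ := by
    have : |J₂| < √(J₂ ^ 2 + 4 * J₁ ^ 2) := by
      rw [← sqrt_sq_eq_abs]
      exact sqrt_lt_sqrt (sq_nonneg _) (lt_add_of_pos_right _ (by positivity))
    have := neg_abs_le J₂
    simp only [μ]
    linarith
  have ha : √μ ≠ 0 := (sqrt_pos.2 hμ).ne'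
  refine ⟨√μ, J₁ / √μ, mul_div_cancel₀ _ ha, ?_⟩
  rw [div_pow, sq_sqrt hμ.le]
  field_simp
  linear_combination hsq / 4

theorem eq_neg_one_and_eq_one_of_abs_mul_sub_mul_eq {p q r s : ℝ} (hp : 0 < p) (hq : 0 < q)
    (hr : |r| ≤ 1) (hs : |s| ≤ 1) (h : |p * s - q * r| = p + q) :
    (r = -1 ∧ s = 1) ∨ (r = 1 ∧ s = -1) := by
  rw [abs_le] at hr hs
  rcases abs_eq (by positivity) |>.1 h with h | h
  · left
    constructor <;> nlinarith
  · right
    constructor <;> nlinarith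

theorem exists_four_mul_eq_of_sin_eq_one_of_sin_eq_neg_one {x y : ℝ} (hx : sin x = 1)
    (hy : sin y = -1) : ∃ k : ℤ, 4 * (x * y) = π ^ 2 * (4 * k - 1) := by
  obtain ⟨m, rfl⟩ := sin_eq_one_iff.1 hx
  obtain ⟨n, rfl⟩ := sin_eq_neg_one_iff.1 hy
  exact ⟨4 * m * n - m + n, by push_cast; ring⟩

theorem pi_mul_sqrt_three_div_le_of_four_mul_sq_eq {J t : ℝ} {k : ℤ} (hJ : 0 < J) (ht : 0 < t)
    (h : 4 * (J * t) ^ 2 = π ^ 2 * (4 * k - 1)) : π * √3 / (2 * t) ≤ J := by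
  have hk : (1 : ℝ) ≤ k := by
    have : (0 : ℤ) < 4 * k - 1 := by
      have : (0 : ℝ) < π ^ 2 * (4 * k - 1) := h ▸ by positivity
      exact_mod_cast pos_of_mul_pos_right this (by positivity)
    exact_mod_cast (by omega : 1 ≤ k)
  rw [div_le_iff₀ (by positivity)]
  refine (pow_le_pow_iff_left₀ (by positivity) (by positivity) two_ne_zero).1 ?_
  have h3 : √3 ^ 2 = 3 := sq_sqrt (by norm_num)
  nlinarith

theorem stmt2_general (J1 J2 t₀ : ℝ) (hJ1 : 0 < J1) (ht₀ : 0 < t₀)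
    (H : Matrix (Fin 4) (Fin 4) ℂ)
    (hH : H = !![0, (J1:ℂ), 0, 0; (J1:ℂ), 0, (J2:ℂ), 0;
                 0, (J2:ℂ), 0, (J1:ℂ); 0, 0, (J1:ℂ), 0])
    (hPST : ‖(NormedSpace.exp ((-(Complex.I * t₀)) • H)) 3 0‖ = 1) :
    J1 ≥ Real.pi * Real.sqrt 3 / (2 * t₀) := by
  obtain ⟨a, b, rfl, rfl⟩ := exists_mul_eq_and_sq_sub_sq_eq J2 hJ1.ne'
  have ha : 0 < a ^ 2 := by positivity [left_ne_zero_of_mul hJ1.ne']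
  have hb : 0 < b ^ 2 := by positivity [right_ne_zero_of_mul hJ1.ne']
  replace hH : H = mirrorChain4 _ _ := hH
  rw [hH, exp_smul_mirrorChain4_apply_three_zero a b t₀ (by positivity), norm_mul,
    Complex.norm_I, mul_one, Complex.norm_real, norm_eq_abs, abs_div,
    abs_of_pos (by positivity : 0 < a ^ 2 + b ^ 2), div_eq_one_iff_eq (by positivity)] at hPST
  obtain ⟨k, hk⟩ : ∃ k : ℤ, 4 * ((a ^ 2 * t₀) * (b ^ 2 * t₀)) = π ^ 2 * (4 * k - 1) := by
    rcases eq_neg_one_and_eq_one_of_abs_mul_sub_mul_eq ha hb (abs_sin_le_one _) (abs_sin_le_one _)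
      hPST with ⟨hx, hy⟩ | ⟨hx, hy⟩
    · rw [mul_comm (a ^ 2 * t₀)]
      exact exists_four_mul_eq_of_sin_eq_one_of_sin_eq_neg_one hy hx
    · exact exists_four_mul_eq_of_sin_eq_one_of_sin_eq_neg_one hx hy
  exact pi_mul_sqrt_three_div_le_of_four_mul_sq_eq hJ1 ht₀ (by linear_combination hk)

/-- If the 4×4 symmetric tridiagonal matrix with zero diagonal and couplings
`(J₁, J₂, J₁)`, `J₁, J₂ > 0`, exhibits perfect state transfer at time `t₀ > 0`
(the `(4,1)` entry of `e^{-iHt₀}` has modulus 1), then `J₁ ≥ π√3/(2t₀)`. -/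
theorem stmt2 (J1 J2 t₀ : ℝ) (hJ1 : 0 < J1) (hJ2 : 0 < J2) (ht₀ : 0 < t₀)
    (H : Matrix (Fin 4) (Fin 4) ℂ)
    (hH : H = !![0, (J1:ℂ), 0, 0; (J1:ℂ), 0, (J2:ℂ), 0;
                 0, (J2:ℂ), 0, (J1:ℂ); 0, 0, (J1:ℂ), 0])
    (hPST : ‖(NormedSpace.exp ((-(Complex.I * t₀)) • H)) 3 0‖ = 1) :
    J1 ≥ Real.pi * Real.sqrt 3 / (2 * t₀) :=
  stmt2_general J1 J2 t₀ hJ1 ht₀ H hH hPST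
end

section
/- Suppose the 5×5 symmetric tridiagonal matrix H with zero diagonal and couplings (J₁, J₂, J₂, J₁), J₁, J₂ > 0, exhibits perfect state transfer at time t₀ > 0. Then J₁ ≥ π/t₀. -/
open Matrix

/-!
Write `c = √(J₁² + 2J₂²)`, `α = J₁/c`, `β = J₂/c`, so that `H = c • mirrorChain α β` with
`α² + 2β² = 1`. An explicit orthogonal matrix diagonalises `mirrorChain α β` with eigenvalues
`0, ±α, ±1`, so the end-to-end amplitude at time `t` is `β² - cos (J₁t)/2 + (α²/2) cos (ct)`.
Its coefficients `β², 1/2, α²/2` sum to `1` and `β² > 0`, so modulus `1` forces `cos (J₁t₀) = -1`;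
as `J₁t₀ > 0`, this gives `J₁t₀ ≥ π`.
-/

theorem Matrix.exp_mul_diagonal_mul_of_mul_eq_one {n : Type*} [Fintype n] [DecidableEq n]
    {Q P : Matrix n n ℂ} (hPQ : P * Q = 1) (w : n → ℂ) :
    NormedSpace.exp (Q * diagonal w * P) = Q * diagonal (fun k => Complex.exp (w k)) * P := by
  have hQ : IsUnit Q := (isUnit_iff_isUnit_det Q).mpr (isUnit_det_of_left_inverse hPQ)
  rw [← inv_eq_left_inv hPQ, exp_conj Q _ hQ, exp_diagonal]
  simp only [Pi.exp_def, Complex.exp_eq_exp_ℂ]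

def mirrorChain {R : Type*} [Zero R] (a b : R) : Matrix (Fin 5) (Fin 5) R :=
  !![0, a, 0, 0, 0; a, 0, b, 0, 0; 0, b, 0, b, 0; 0, 0, b, 0, a; 0, 0, 0, a, 0]

theorem smul_mirrorChain {R : Type*} [MulZeroClass R] (r a b : R) :
    r • mirrorChain a b = mirrorChain (r * a) (r * b) := by
  ext i j
  fin_cases i <;> fin_cases j <;> simp [mirrorChain]

section Eigenbasis

variable {K : Type*} [Field K]

def mirrorChainEigenbasis (α β : K) : Matrix (Fin 5) (Fin 5) K :=
  !![β, 1/2, 1/2, α/2, α/2;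
     0, 1/2, -1/2, 1/2, -1/2;
     -α, 0, 0, β, β;
     0, -1/2, 1/2, 1/2, -1/2;
     β, -1/2, -1/2, α/2, α/2]

theorem mirrorChainEigenbasis_transpose_mul_self [CharZero K] {α β : K}
    (h : α ^ 2 + 2 * β ^ 2 = 1) :
    (mirrorChainEigenbasis α β)ᵀ * mirrorChainEigenbasis α β = 1 := by
  ext i j
  fin_cases i <;> fin_cases j <;>
    simp [mirrorChainEigenbasis, mul_apply, Fin.sum_univ_five, one_apply] <;> grind

theorem mirrorChain_eq_eigenbasis_conj [CharZero K] (α β : K) :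
    mirrorChain α β = mirrorChainEigenbasis α β * diagonal ![0, α, -α, 1, -1] *
      (mirrorChainEigenbasis α β)ᵀ := by
  ext i j
  fin_cases i <;> fin_cases j <;>
    simp [mirrorChain, mirrorChainEigenbasis, mul_apply, vecMul_diagonal, Fin.sum_univ_five] <;>
    ring

end Eigenbasis

theorem exp_smul_mirrorChain_apply_four_zero {α β : ℂ} (h : α ^ 2 + 2 * β ^ 2 = 1) (s : ℂ) :
    NormedSpace.exp (s • mirrorChain α β) 4 0 =
      β ^ 2 - Complex.cosh (α * s) / 2 + α ^ 2 / 2 * Complex.cosh s := by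
  rw [mirrorChain_eq_eigenbasis_conj, ← Matrix.smul_mul, ← Matrix.mul_smul, ← diagonal_smul,
    Matrix.exp_mul_diagonal_mul_of_mul_eq_one (mirrorChainEigenbasis_transpose_mul_self h)]
  simp only [mirrorChainEigenbasis, one_div, Nat.succ_eq_add_one, Nat.reduceAdd, Pi.smul_apply,
    smul_eq_mul, cons_mul, empty_mul, Equiv.symm_apply_apply, Fin.isValue, mul_apply, of_apply,
    cons_val', vecMul_diagonal, cons_val_fin_one, cons_val, cons_val_one, transpose_apply,
    cons_val_zero, Fin.sum_univ_five, mul_zero, Complex.exp_zero, mul_one, mul_neg, Complex.cosh]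
  rw [mul_comm α s]
  ring

theorem cos_eq_neg_one_of_abs_amplitude_eq_one {α β x y : ℝ} (h : α ^ 2 + 2 * β ^ 2 = 1)
    (hβ : β ≠ 0) (hamp : |β ^ 2 - Real.cos x / 2 + α ^ 2 / 2 * Real.cos y| = 1) :
    Real.cos x = -1 := by
  have hβ2 : 0 < β ^ 2 := by positivity
  have hy := mul_le_mul_of_nonneg_left (Real.cos_le_one y) (sq_nonneg α)
  have hy' := mul_le_mul_of_nonneg_left (Real.neg_one_le_cos y) (sq_nonneg α)
  have hx := Real.neg_one_le_cos x
  have hx' := Real.cos_le_one x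
  rcases abs_eq zero_le_one |>.mp hamp with hamp | hamp <;> linarith

theorem Real.pi_le_of_cos_eq_neg_one {x : ℝ} (hx : 0 ≤ x) (h : cos x = -1) : Real.pi ≤ x := by
  by_contra! hlt
  have := cos_lt_cos_of_nonneg_of_le_pi hx le_rfl hlt
  rw [cos_pi, h] at this
  exact lt_irrefl _ this

/-- If the 5×5 symmetric tridiagonal matrix with zero diagonal and couplings
`(J₁, J₂, J₂, J₁)`, `J₁, J₂ > 0`, exhibits perfect state transfer at time `t₀ > 0`
(the `(5,1)` entry of `e^{-iHt₀}` has modulus 1), then `J₁ ≥ π/t₀`. -/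
theorem stmt3 (J1 J2 t₀ : ℝ) (hJ1 : 0 < J1) (hJ2 : 0 < J2) (ht₀ : 0 < t₀)
    (H : Matrix (Fin 5) (Fin 5) ℂ)
    (hH : H = !![0, (J1:ℂ), 0, 0, 0; (J1:ℂ), 0, (J2:ℂ), 0, 0;
                 0, (J2:ℂ), 0, (J2:ℂ), 0; 0, 0, (J2:ℂ), 0, (J1:ℂ);
                 0, 0, 0, (J1:ℂ), 0])
    (hPST : ‖(NormedSpace.exp ((-(Complex.I * t₀)) • H)) 4 0‖ = 1) :
    J1 ≥ Real.pi / t₀ := by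
  set c := √(J1 ^ 2 + 2 * J2 ^ 2)
  have hc : 0 < c := Real.sqrt_pos.mpr (by positivity)
  have hnorm : (J1 / c) ^ 2 + 2 * (J2 / c) ^ 2 = 1 := by
    rw [div_pow, div_pow, Real.sq_sqrt (by positivity)]
    field_simp
  have hH' : -(Complex.I * t₀) • H =
      -(((c * t₀ : ℝ) : ℂ) * Complex.I) • mirrorChain ((J1 / c : ℝ) : ℂ) ((J2 / c : ℝ) : ℂ) := by
    have hcC : (c : ℂ) ≠ 0 := by exact_mod_cast hc.ne'
    rw [hH, ← mirrorChain, smul_mirrorChain, smul_mirrorChain]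
    congr 1 <;> push_cast <;> field_simp
  rw [hH', exp_smul_mirrorChain_apply_four_zero (by exact_mod_cast hnorm), mul_neg,
    Complex.cosh_neg, Complex.cosh_neg, ← mul_assoc, ← Complex.ofReal_mul, Complex.cosh_mul_I,
    Complex.cosh_mul_I, ← Complex.ofReal_cos, ← Complex.ofReal_cos,
    show J1 / c * (c * t₀) = J1 * t₀ by field_simp] at hPST
  have hcos : Real.cos (J1 * t₀) = -1 := by
    refine cos_eq_neg_one_of_abs_amplitude_eq_one (y := c * t₀) hnorm (by positivity) ?_
    rw [← Real.norm_eq_abs, ← Complex.norm_real]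
    exact_mod_cast hPST
  rw [ge_iff_le, div_le_iff₀ ht₀]
  exact Real.pi_le_of_cos_eq_neg_one (by positivity) hcos
end

section
/- (Mandelstam–Tamm for state transfer) Let H be a Hermitian matrix and |ψ⟩ a unit vector. If e^{-iHt₀}|ψ⟩ is orthogonal to |ψ⟩ for some t₀ > 0, then t₀ ≥ π / (2√(⟨ψ|H²|ψ⟩ − ⟨ψ|H|ψ⟩²)). -/
/-!
Diagonalising `H`, the state `ψ` becomes a probability distribution `p` on the eigenvalues `λₖ`,
with mean `E1` and second moment `E2`, and orthogonality says that its characteristic function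
vanishes at `t₀`: `∑ pₖ e^{-i t₀ λₖ} = 0`, so also `∑ pₖ cos (t₀ (λₖ - E1)) = 0`. Averaging the
elementary inequality `x² + π cos x ≥ (π/2)²` at `x = t₀ (λₖ - E1)` gives
`t₀² (E2 - E1²) ≥ (π/2)²`.
-/

open Matrix

open Real in
/-- The parabola `π/4 - x²/π` lies below `cos` and touches it at `±π/2`. -/
lemma pi_div_two_sq_le_sq_add_pi_mul_cos (x : ℝ) : (π / 2) ^ 2 ≤ x ^ 2 + π * cos x := by
  wlog hx : 0 ≤ x generalizing x
  · simpa using this (-x) (by linarith)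
  rcases le_total (π / 2) x with hbig | hsmall
  · have hcos : cos x = -sin (x - π / 2) := by simpa using cos_add_pi_div_two (x - π / 2)
    rw [hcos]
    nlinarith [mul_le_mul_of_nonneg_left (sin_le (sub_nonneg.2 hbig)) pi_pos.le,
      sq_nonneg (x - π / 2)]
  · have hcos : cos x = sin (π / 2 - x) := (sin_pi_div_two_sub x).symm
    have hsin := sin_ge_sub_cube (sub_nonneg.2 hsmall)
    have hpi : π * (π / 2 - x) ≤ 6 := by nlinarith [pi_lt_d2, pi_pos]
    nlinarith [mul_nonneg (sq_nonneg (π / 2 - x)) (sub_nonneg.2 hpi)]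

section WeightedSums

variable {ι : Type*} [Fintype ι] (p ev : ι → ℝ)

lemma sum_mul_cos_eq_zero_of_sum_mul_cexp_eq_zero {t : ℝ}
    (h : ∑ k, (p k : ℂ) * Complex.exp (-(Complex.I * t) * ev k) = 0) (m : ℝ) :
    ∑ k, p k * Real.cos (t * (ev k - m)) = 0 := by
  have hrot : ∑ k, (p k : ℂ) * Complex.exp ((t * (m - ev k) : ℝ) * Complex.I) = 0 := by
    rw [← mul_zero (Complex.exp (Complex.I * t * m)), ← h, Finset.mul_sum]
    refine Finset.sum_congr rfl fun k _ => ?_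
    rw [mul_left_comm, ← Complex.exp_add]
    push_cast
    ring_nf
  have := congrArg Complex.re hrot
  simp only [Complex.re_sum, Complex.re_ofReal_mul, Complex.exp_ofReal_mul_I_re,
    Complex.zero_re] at this
  simpa only [← neg_sub (ev _) m, mul_neg, Real.cos_neg] using this

lemma sum_mul_sub_mean_sq_eq (hp : ∑ k, p k = 1) :
    ∑ k, p k * (ev k - ∑ j, p j * ev j) ^ 2 = ∑ k, p k * ev k ^ 2 - (∑ k, p k * ev k) ^ 2 := by
  set m := ∑ j, p j * ev j
  calc ∑ k, p k * (ev k - m) ^ 2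
      = ∑ k, p k * ev k ^ 2 - 2 * m * ∑ k, p k * ev k + m ^ 2 * ∑ k, p k := by
        simp only [Finset.mul_sum, ← Finset.sum_sub_distrib, ← Finset.sum_add_distrib]
        exact Finset.sum_congr rfl fun k _ => by ring
    _ = _ := by rw [hp]; ring

lemma pi_div_two_sq_le_sq_mul_variance (hp0 : ∀ k, 0 ≤ p k) (hp : ∑ k, p k = 1) {t : ℝ}
    (h : ∑ k, (p k : ℂ) * Complex.exp (-(Complex.I * t) * ev k) = 0) :
    (Real.pi / 2) ^ 2 ≤ t ^ 2 * (∑ k, p k * ev k ^ 2 - (∑ k, p k * ev k) ^ 2) := by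
  set m := ∑ j, p j * ev j
  calc (Real.pi / 2) ^ 2 = ∑ k, p k * (Real.pi / 2) ^ 2 := by rw [← Finset.sum_mul, hp, one_mul]
    _ ≤ ∑ k, p k * ((t * (ev k - m)) ^ 2 + Real.pi * Real.cos (t * (ev k - m))) :=
        Finset.sum_le_sum fun k _ =>
          mul_le_mul_of_nonneg_left (pi_div_two_sq_le_sq_add_pi_mul_cos _) (hp0 k)
    _ = t ^ 2 * ∑ k, p k * (ev k - m) ^ 2 + Real.pi * ∑ k, p k * Real.cos (t * (ev k - m)) := by
        simp only [Finset.mul_sum, ← Finset.sum_add_distrib]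
        exact Finset.sum_congr rfl fun k _ => by ring
    _ = _ := by
        rw [sum_mul_sub_mean_sq_eq p ev hp, sum_mul_cos_eq_zero_of_sum_mul_cexp_eq_zero p ev h,
          mul_zero, add_zero]

end WeightedSums

lemma div_sqrt_le_of_sq_le_sq_mul {a t v : ℝ} (ht : 0 ≤ t) (h : a ^ 2 ≤ t ^ 2 * v) :
    a / √v ≤ t := by
  rcases le_or_gt v 0 with hv | hv
  · rwa [Real.sqrt_eq_zero'.2 hv, div_zero]
  rw [div_le_iff₀ (Real.sqrt_pos.2 hv)]
  calc a ≤ √(a ^ 2) := (le_abs_self a).trans (Real.sqrt_sq_eq_abs a).ge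
    _ ≤ √(t ^ 2 * v) := Real.sqrt_le_sqrt h
    _ = t * √v := by rw [Real.sqrt_mul (sq_nonneg t), Real.sqrt_sq ht]

section Conjugation

variable {n : Type*} [Fintype n] [DecidableEq n]

lemma star_dotProduct_conj_diagonal_mulVec (U : Matrix n n ℂ) (d : n → ℂ) (ψ : n → ℂ) :
    star ψ ⬝ᵥ ((U * diagonal d * star U) *ᵥ ψ) =
      ∑ k, Complex.normSq ((star U *ᵥ ψ) k) * d k := by
  have hstar : star ψ ᵥ* U = star (star U *ᵥ ψ) := by
    rw [star_mulVec, star_eq_conjTranspose, conjTranspose_conjTranspose]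
  rw [← mulVec_mulVec, ← mulVec_mulVec, dotProduct_mulVec, hstar, dotProduct]
  refine Finset.sum_congr rfl fun k _ => ?_
  rw [mulVec_diagonal, Pi.star_apply, Complex.star_def, Complex.normSq_eq_conj_mul_self]
  ring

lemma exp_unitary_conj_diagonal (U : unitaryGroup n ℂ) (d : n → ℂ) :
    NormedSpace.exp ((U : Matrix n n ℂ) * diagonal d * star (U : Matrix n n ℂ)) =
      U * diagonal (fun k => Complex.exp (d k)) * star (U : Matrix n n ℂ) := by
  have := Matrix.exp_units_conj (Unitary.toUnits U) (diagonal d)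
  rw [exp_diagonal, Pi.exp_def, ← Complex.exp_eq_exp_ℂ] at this
  exact this

end Conjugation

namespace Matrix.IsHermitian

variable {n : Type*} [Fintype n] [DecidableEq n] {H : Matrix n n ℂ} (hH : H.IsHermitian)

local notation "U" => (hH.eigenvectorUnitary : Matrix n n ℂ)

lemma eq_conj_diagonal_eigenvalues :
    H = U * diagonal (fun k => (hH.eigenvalues k : ℂ)) * star U := by
  conv_lhs => rw [hH.spectral_theorem, Unitary.conjStarAlgAut_apply]
  rfl

lemma mul_self_eq_conj_diagonal_eigenvalues :
    H * H = U * diagonal (fun k => (hH.eigenvalues k : ℂ) ^ 2) * star U := by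
  have hUU : star U * U = 1 := Unitary.coe_star_mul_self _
  conv_lhs => rw [hH.eq_conj_diagonal_eigenvalues]
  calc _ = U * (diagonal (fun k => (hH.eigenvalues k : ℂ)) * (star U * U) *
          diagonal (fun k => (hH.eigenvalues k : ℂ))) * star U := by noncomm_ring
    _ = _ := by simp only [hUU, mul_one, diagonal_mul_diagonal, sq]

lemma exp_smul_eq_conj_diagonal_eigenvalues (c : ℂ) :
    NormedSpace.exp (c • H) =
      U * diagonal (fun k => Complex.exp (c * hH.eigenvalues k)) * star U := by
  conv_lhs => rw [hH.eq_conj_diagonal_eigenvalues]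
  rw [← smul_mul_assoc, ← mul_smul_comm, ← diagonal_smul]
  exact exp_unitary_conj_diagonal _ _

noncomputable def spectralWeights (ψ : n → ℂ) (k : n) : ℝ :=
  Complex.normSq ((star U *ᵥ ψ) k)

variable (ψ : n → ℂ)

lemma spectralWeights_nonneg (k : n) : 0 ≤ hH.spectralWeights ψ k :=
  Complex.normSq_nonneg _

lemma ofReal_sum_spectralWeights : ((∑ k, hH.spectralWeights ψ k : ℝ) : ℂ) = star ψ ⬝ᵥ ψ := by
  have h := star_dotProduct_conj_diagonal_mulVec U (fun _ => 1) ψ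
  rw [diagonal_one, mul_one, Unitary.mul_star_self_of_mem hH.eigenvectorUnitary.2, one_mulVec] at h
  rw [h]
  push_cast
  simp only [mul_one]
  rfl

lemma ofReal_sum_spectralWeights_mul_eigenvalues :
    ((∑ k, hH.spectralWeights ψ k * hH.eigenvalues k : ℝ) : ℂ) = star ψ ⬝ᵥ (H *ᵥ ψ) := by
  conv_rhs => rw [hH.eq_conj_diagonal_eigenvalues]
  rw [star_dotProduct_conj_diagonal_mulVec]
  push_cast
  rfl

lemma ofReal_sum_spectralWeights_mul_eigenvalues_sq :
    ((∑ k, hH.spectralWeights ψ k * hH.eigenvalues k ^ 2 : ℝ) : ℂ) =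
      star ψ ⬝ᵥ ((H * H) *ᵥ ψ) := by
  rw [hH.mul_self_eq_conj_diagonal_eigenvalues, star_dotProduct_conj_diagonal_mulVec]
  push_cast
  rfl

lemma sum_spectralWeights_mul_cexp (c : ℂ) :
    ∑ k, (hH.spectralWeights ψ k : ℂ) * Complex.exp (c * hH.eigenvalues k) =
      star ψ ⬝ᵥ (NormedSpace.exp (c • H) *ᵥ ψ) := by
  rw [hH.exp_smul_eq_conj_diagonal_eigenvalues, star_dotProduct_conj_diagonal_mulVec]
  rfl

end Matrix.IsHermitian

/-- Mandelstam–Tamm bound for state transfer: if `H` is Hermitian, `ψ` a unit vector,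
`E₁ = ⟨ψ|H|ψ⟩`, `E₂ = ⟨ψ|H²|ψ⟩`, and `e^{-iHt₀}ψ ⊥ ψ` for some `t₀ > 0`, then
`t₀ ≥ π / (2√(E₂ − E₁²))`. -/
theorem stmt4 (N : ℕ) (H : Matrix (Fin N) (Fin N) ℂ) (hH : H.IsHermitian)
    (ψ : Fin N → ℂ) (hψ : star ψ ⬝ᵥ ψ = 1)
    (E1 E2 : ℝ)
    (hE1 : star ψ ⬝ᵥ (H *ᵥ ψ) = (E1 : ℂ))
    (hE2 : star ψ ⬝ᵥ ((H * H) *ᵥ ψ) = (E2 : ℂ))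
    (t₀ : ℝ) (ht₀ : 0 < t₀)
    (horth : star ψ ⬝ᵥ ((NormedSpace.exp ((-(Complex.I * t₀)) • H)) *ᵥ ψ) = 0) :
    t₀ ≥ Real.pi / (2 * Real.sqrt (E2 - E1^2)) := by
  have hsum : ∑ k, hH.spectralWeights ψ k = 1 := by
    exact_mod_cast (hH.ofReal_sum_spectralWeights ψ).trans hψ
  have hmean : ∑ k, hH.spectralWeights ψ k * hH.eigenvalues k = E1 := by
    exact_mod_cast (hH.ofReal_sum_spectralWeights_mul_eigenvalues ψ).trans hE1
  have hsecond : ∑ k, hH.spectralWeights ψ k * hH.eigenvalues k ^ 2 = E2 := by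
    exact_mod_cast (hH.ofReal_sum_spectralWeights_mul_eigenvalues_sq ψ).trans hE2
  have hbound := pi_div_two_sq_le_sq_mul_variance _ _ (hH.spectralWeights_nonneg ψ) hsum
    ((hH.sum_spectralWeights_mul_cexp ψ _).trans horth)
  rw [hmean, hsecond] at hbound
  rw [ge_iff_le, ← div_div]
  exact div_sqrt_le_of_sq_le_sq_mul ht₀.le hbound
end

section
/- Let H be a mirror-symmetric (SHS = H) Hermitian matrix whose eigenvalues satisfy: every eigenvector |λₙ⟩ obeys S|λₙ⟩ = σₙ|λₙ⟩ with σₙ ∈ {+1, −1}, and e^{-iλₙt₀} = σₙ e^{iφ} for all n and some global phase φ. Then e^{-iHt₀}|1⟩ = e^{iφ}|N⟩, i.e., perfect state transfer occurs at time t₀. -/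
/-!
Expand `|1⟩ = ∑ cₙ |λₙ⟩` in the eigenbasis. On each eigenvector the evolution acts as
`e^{-iλₙt₀} = σₙ e^{iφ}`, which is exactly how `e^{iφ} S` acts on it, so the two operators agree
on `|1⟩`; and the flip sends `|1⟩` to `|N⟩`.
-/

open Matrix Finset

namespace Matrix

variable {m n ι α : Type*}

theorem mulVec_sum_smul_eq_of_forall_mulVec_eq [Fintype n] [CommSemiring α]
    {A B : Matrix m n α} (s : Finset ι) (v : ι → n → α) (hAB : ∀ i ∈ s, A *ᵥ v i = B *ᵥ v i)
    (c : ι → α) : A *ᵥ ∑ i ∈ s, c i • v i = B *ᵥ ∑ i ∈ s, c i • v i := by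
  simp only [mulVec_sum, mulVec_smul]
  exact Finset.sum_congr rfl fun i hi => by rw [hAB i hi]

theorem flip_mulVec_single_zero [NonAssocSemiring α] {N : ℕ} {S : Matrix (Fin (N+1)) (Fin (N+1)) α}
    (hS : ∀ i j : Fin (N+1), S i j = if (j : ℕ) = N - (i : ℕ) then 1 else 0) :
    S *ᵥ Pi.single 0 1 = Pi.single (Fin.last N) 1 := by
  funext i
  rw [mulVec_single_one, col_apply, hS, Pi.single_apply]
  congr 1
  simp only [Fin.val_zero, Fin.ext_iff, Fin.val_last, eq_iff_iff]
  omega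

variable [Fintype m] [DecidableEq m]

theorem pow_mulVec_of_mulVec_eq_smul [CommSemiring α] {A : Matrix m m α} {v : m → α} {μ : α}
    (h : A *ᵥ v = μ • v) (k : ℕ) : A ^ k *ᵥ v = μ ^ k • v := by
  induction k with
  | zero => simp
  | succ k ih => rw [pow_succ, ← mulVec_mulVec, h, mulVec_smul, ih, smul_smul, ← pow_succ']

open scoped Norms.Operator in
theorem exp_mulVec_of_mulVec_eq_smul {𝕂 : Type*} [RCLike 𝕂] {A : Matrix m m 𝕂} {v : m → 𝕂}
    {μ : 𝕂} (h : A *ᵥ v = μ • v) : NormedSpace.exp A *ᵥ v = NormedSpace.exp μ • v := by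
  have hA := (NormedSpace.exp_series_hasSum_exp' (𝕂 := 𝕂) A).map (mulVec.addMonoidHomLeft v)
    (continuous_id.matrix_mulVec continuous_const)
  have hμ := (NormedSpace.exp_series_hasSum_exp' (𝕂 := 𝕂) μ).smul_const v
  refine hA.unique ?_
  convert hμ using 2 with k
  simp [mulVec.addMonoidHomLeft, smul_mulVec, pow_mulVec_of_mulVec_eq_smul h, smul_smul]

end Matrix

theorem stmt8_general (N : ℕ) (H : Matrix (Fin (N+1)) (Fin (N+1)) ℂ)
    (S : Matrix (Fin (N+1)) (Fin (N+1)) ℂ)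
    (hS : ∀ i j : Fin (N+1), S i j = if (j : ℕ) = N - (i : ℕ) then 1 else 0)
    (t₀ φ : ℝ)
    (lam : Fin (N+1) → ℝ) (σ : Fin (N+1) → ℂ)
    (v : Fin (N+1) → Fin (N+1) → ℂ)
    (heig : ∀ n, H *ᵥ v n = (lam n : ℂ) • v n)
    (hflip : ∀ n, S *ᵥ v n = σ n • v n)
    (hphase : ∀ n, Complex.exp (-(Complex.I * lam n * t₀)) = σ n * Complex.exp (Complex.I * φ))
    (c : Fin (N+1) → ℂ)
    (hspan : (Pi.single (0 : Fin (N+1)) 1 : Fin (N+1) → ℂ) = ∑ n, c n • v n) :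
    (NormedSpace.exp ((-(Complex.I * t₀)) • H)) *ᵥ Pi.single (0 : Fin (N+1)) 1 =
      Complex.exp (Complex.I * φ) • (Pi.single (Fin.last N) 1 : Fin (N+1) → ℂ) := by
  have hevol : ∀ n, NormedSpace.exp ((-(Complex.I * t₀)) • H) *ᵥ v n
      = (Complex.exp (Complex.I * φ) • S) *ᵥ v n := by
    intro n
    have hscaled : ((-(Complex.I * t₀)) • H) *ᵥ v n = (-(Complex.I * lam n * t₀)) • v n := by
      rw [smul_mulVec, heig n, smul_smul]
      ring_nf
    rw [exp_mulVec_of_mulVec_eq_smul hscaled, ← Complex.exp_eq_exp_ℂ, hphase n, smul_mulVec,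
      hflip n, smul_smul, mul_comm]
  calc NormedSpace.exp ((-(Complex.I * t₀)) • H) *ᵥ Pi.single 0 1
      = (Complex.exp (Complex.I * φ) • S) *ᵥ Pi.single 0 1 := by
        rw [hspan]
        exact mulVec_sum_smul_eq_of_forall_mulVec_eq _ _ (fun n _ => hevol n) c
    _ = Complex.exp (Complex.I * φ) • Pi.single (Fin.last N) 1 := by
        rw [smul_mulVec, flip_mulVec_single_zero hS]

/-- If `H` is Hermitian and mirror symmetric (`SHS = H` for the flip `S`), with an
eigenbasis `|λₙ⟩` (spanning the first standard basis vector) such that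
`S|λₙ⟩ = σₙ|λₙ⟩` with `σₙ = ±1` and `e^{-iλₙt₀} = σₙ e^{iφ}` for all `n`, then
`e^{-iHt₀}|1⟩ = e^{iφ}|N⟩`: perfect state transfer occurs at time `t₀`. -/
theorem stmt8 (N : ℕ) (H : Matrix (Fin (N+1)) (Fin (N+1)) ℂ) (hH : H.IsHermitian)
    (S : Matrix (Fin (N+1)) (Fin (N+1)) ℂ)
    (hS : ∀ i j : Fin (N+1), S i j = if (j : ℕ) = N - (i : ℕ) then 1 else 0)
    (hsym : S * H * S = H)
    (t₀ φ : ℝ)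
    (lam : Fin (N+1) → ℝ) (σ : Fin (N+1) → ℂ)
    (v : Fin (N+1) → Fin (N+1) → ℂ)
    (heig : ∀ n, H *ᵥ v n = (lam n : ℂ) • v n)
    (hflip : ∀ n, S *ᵥ v n = σ n • v n)
    (hσ : ∀ n, σ n = 1 ∨ σ n = -1)
    (hphase : ∀ n, Complex.exp (-(Complex.I * lam n * t₀)) = σ n * Complex.exp (Complex.I * φ))
    (c : Fin (N+1) → ℂ)
    (hspan : (Pi.single (0 : Fin (N+1)) 1 : Fin (N+1) → ℂ) = ∑ n, c n • v n) :
    (NormedSpace.exp ((-(Complex.I * t₀)) • H)) *ᵥ Pi.single (0 : Fin (N+1)) 1 =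
      Complex.exp (Complex.I * φ) • (Pi.single (Fin.last N) 1 : Fin (N+1) → ℂ) :=
  stmt8_general N H S hS t₀ φ lam σ v heig hflip hphase c hspan
end

section
/- Let H₀ be a mirror-symmetric real symmetric tridiagonal matrix with zero diagonal, positive couplings, and perfect state transfer at time t₀ (so e^{-iH₀t₀}|1⟩ = e^{iφ}|N⟩ for some phase φ). Then for all t, |⟨N| e^{-iH₀(t₀+δ)} |1⟩| = |⟨1| e^{-iH₀δ} |1⟩|, so to second order in δ the fidelity loss is governed by ⟨1|H₀²|1⟩ = J₁²: specifically |⟨N|e^{-iH₀(t₀+δ)}|1⟩| ≥ 1 − J₁²δ²/2. -/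
/-!
The propagator `U(t) = exp(-itH)` of a Hermitian `H` is unitary. Perfect state transfer makes
the entry `U(t₀)_{N,1} = e^{iφ}` a unit complex number, so the rest of row `N` of `U(t₀)`
vanishes and `U(t₀ + δ)_{N,1} = e^{iφ} U(δ)_{1,1}`. Writing `p_k = |⟨1|v_k⟩|²` for an
orthonormal eigenbasis `v_k` of `H` with eigenvalues `λ_k`, one has
`Re U(δ)_{1,1} = ∑ p_k cos(δλ_k) ≥ 1 - δ²/2 ∑ p_k λ_k² = 1 - δ² (H²)_{1,1}/2`,
and for the chain `(H²)_{1,1} = J₁²`.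
-/

open Matrix

variable {n : Type*} [Fintype n] [DecidableEq n]

namespace Matrix

lemma sum_normSq_apply_eq_one {U : Matrix n n ℂ} (hU : U ∈ unitaryGroup n ℂ) (i : n) :
    ∑ k, Complex.normSq (U i k) = 1 := by
  have h := congr_fun₂ (mem_unitaryGroup_iff.mp hU) i i
  simp only [mul_apply, star_apply, one_apply_eq, Complex.star_def, Complex.mul_conj] at h
  exact_mod_cast h

lemma apply_eq_zero_of_normSq_apply_eq_one {U : Matrix n n ℂ} (hU : U ∈ unitaryGroup n ℂ)
    {i j k : n} (hij : Complex.normSq (U i j) = 1) (hk : k ≠ j) : U i k = 0 := by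
  have hrest : ∑ l ∈ Finset.univ.erase j, Complex.normSq (U i l) = 0 := by
    have := Finset.sum_erase_add Finset.univ (fun l => Complex.normSq (U i l)) (Finset.mem_univ j)
    rw [sum_normSq_apply_eq_one hU, hij] at this
    linarith
  rw [Finset.sum_eq_zero_iff_of_nonneg fun l _ => Complex.normSq_nonneg _] at hrest
  exact Complex.normSq_eq_zero.mp (hrest k (Finset.mem_erase.mpr ⟨hk, Finset.mem_univ k⟩))

lemma mul_apply_eq_of_normSq_apply_eq_one {U : Matrix n n ℂ} (hU : U ∈ unitaryGroup n ℂ)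
    {i j : n} (hij : Complex.normSq (U i j) = 1) (V : Matrix n n ℂ) (l : n) :
    (U * V) i l = U i j * V j l := by
  rw [mul_apply, Finset.sum_eq_single j (fun k _ hk => by
    rw [apply_eq_zero_of_normSq_apply_eq_one hU hij hk, zero_mul]) (by simp)]

lemma mul_diagonal_mul_star_apply_self (W : Matrix n n ℂ) (d : n → ℂ) (i : n) :
    (W * diagonal d * star W) i i = ∑ k, (Complex.normSq (W i k) : ℂ) * d k := by
  refine mul_apply.trans (Finset.sum_congr rfl fun k _ => ?_)
  rw [mul_diagonal, star_apply, Complex.star_def, mul_right_comm, Complex.mul_conj]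

section UnitaryConj

variable {W : Matrix n n ℂ} (hW : W ∈ unitaryGroup n ℂ) (d : n → ℂ)
include hW

lemma conj_diagonal_mul_self_of_mem_unitaryGroup :
    (W * diagonal d * star W) * (W * diagonal d * star W) = W * diagonal (d ^ 2) * star W := by
  calc (W * diagonal d * star W) * (W * diagonal d * star W)
      = W * diagonal d * (star W * W) * diagonal d * star W := by simp only [Matrix.mul_assoc]
    _ = W * diagonal (d ^ 2) * star W := by
      rw [mem_unitaryGroup_iff'.mp hW, Matrix.mul_one, Matrix.mul_assoc W, diagonal_mul_diagonal,
        sq]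
      rfl

lemma exp_smul_conj_diagonal_of_mem_unitaryGroup (c : ℂ) :
    NormedSpace.exp (c • (W * diagonal d * star W)) =
      W * diagonal (fun k => Complex.exp (c * d k)) * star W := by
  have hinv : W⁻¹ = star W := inv_eq_left_inv (mem_unitaryGroup_iff'.mp hW)
  have hunit : IsUnit W := Unitary.isUnit_coe (U := ⟨W, hW⟩)
  rw [← hinv, ← smul_mul_assoc, ← mul_smul_comm, ← diagonal_smul, exp_conj _ _ hunit,
    exp_diagonal]
  congr 3
  funext k
  simp [← Complex.exp_eq_exp_ℂ]

end UnitaryConj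

lemma exp_add_smul (a b : ℂ) (H : Matrix n n ℂ) :
    NormedSpace.exp ((a + b) • H) = NormedSpace.exp (a • H) * NormedSpace.exp (b • H) := by
  rw [add_smul]
  exact exp_add_of_commute _ _ (((Commute.refl H).smul_left _).smul_right _)

namespace IsHermitian

variable {H : Matrix n n ℂ}

lemma exp_neg_I_smul_mem_unitaryGroup (hH : H.IsHermitian) (r : ℝ) :
    NormedSpace.exp ((-(Complex.I * r)) • H) ∈ unitaryGroup n ℂ := by
  have hstar : ((-(Complex.I * r)) • H)ᴴ = (Complex.I * r) • H := by
    rw [conjTranspose_smul, hH.eq]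
    simp [Complex.conj_ofReal]
  rw [mem_unitaryGroup_iff, star_eq_conjTranspose, ← exp_conjTranspose, hstar, ← exp_add_smul]
  simp

lemma exp_apply_of_exp_mulVec_single (hH : H.IsHermitian) {a b : n} {t₀ : ℝ} {z : ℂ}
    (hz : ‖z‖ = 1)
    (hPST : NormedSpace.exp ((-(Complex.I * t₀)) • H) *ᵥ Pi.single a 1 = z • Pi.single b 1)
    (δ : ℝ) :
    NormedSpace.exp ((-(Complex.I * (t₀ + δ))) • H) b a =
      z * NormedSpace.exp ((-(Complex.I * δ)) • H) a a := by
  have hU := hH.exp_neg_I_smul_mem_unitaryGroup t₀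
  have hba : NormedSpace.exp ((-(Complex.I * t₀)) • H) b a = z := by
    simpa [mulVec_single] using congrFun hPST b
  have hnormSq : Complex.normSq (NormedSpace.exp ((-(Complex.I * t₀)) • H) b a) = 1 := by
    rw [hba, Complex.normSq_eq_norm_sq, hz, one_pow]
  rw [show -(Complex.I * (t₀ + δ)) = -(Complex.I * t₀) + -(Complex.I * δ) by ring, exp_add_smul,
    mul_apply_eq_of_normSq_apply_eq_one hU hnormSq, hba]

end IsHermitian

end Matrix

lemma one_sub_sum_mul_sq_mul_sq_div_two_le_sum_mul_cos {ι : Type*} (s : Finset ι) {p : ι → ℝ}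
    (hp : ∀ k ∈ s, 0 ≤ p k) (hp1 : ∑ k ∈ s, p k = 1) (μ : ι → ℝ) (t : ℝ) :
    1 - (∑ k ∈ s, p k * μ k ^ 2) * t ^ 2 / 2 ≤ ∑ k ∈ s, p k * Real.cos (t * μ k) :=
  calc 1 - (∑ k ∈ s, p k * μ k ^ 2) * t ^ 2 / 2 = ∑ k ∈ s, p k * (1 - (t * μ k) ^ 2 / 2) := by
        simp only [mul_sub, mul_one, Finset.sum_sub_distrib, hp1, Finset.sum_mul, Finset.sum_div]
        congr 1
        exact Finset.sum_congr rfl fun k _ => by ring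
    _ ≤ ∑ k ∈ s, p k * Real.cos (t * μ k) :=
        Finset.sum_le_sum fun k hk =>
          mul_le_mul_of_nonneg_left Real.one_sub_sq_div_two_le_cos (hp k hk)

lemma Matrix.IsHermitian.one_sub_mul_self_apply_mul_sq_div_two_le_re_exp_apply
    {H : Matrix n n ℂ} (hH : H.IsHermitian) (i : n) (t : ℝ) :
    1 - ((H * H) i i).re * t ^ 2 / 2 ≤ (NormedSpace.exp ((-(Complex.I * t)) • H) i i).re := by
  set W : Matrix n n ℂ := ↑hH.eigenvectorUnitary
  have hW : W ∈ unitaryGroup n ℂ := hH.eigenvectorUnitary.2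
  set μ := hH.eigenvalues
  have hH' : H = W * diagonal (fun k => (μ k : ℂ)) * star W := hH.spectral_theorem
  have hHH : ((H * H) i i).re = ∑ k, Complex.normSq (W i k) * μ k ^ 2 := by
    rw [hH', conj_diagonal_mul_self_of_mem_unitaryGroup hW, mul_diagonal_mul_star_apply_self]
    simp [Complex.re_sum, ← Complex.ofReal_pow]
  have hexp : (NormedSpace.exp ((-(Complex.I * t)) • H) i i).re =
      ∑ k, Complex.normSq (W i k) * Real.cos (t * μ k) := by
    rw [hH', exp_smul_conj_diagonal_of_mem_unitaryGroup hW, mul_diagonal_mul_star_apply_self,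
      Complex.re_sum]
    refine Finset.sum_congr rfl fun k _ => ?_
    rw [Complex.re_ofReal_mul, show -(Complex.I * t) * μ k = ((-(t * μ k) : ℝ) : ℂ) * Complex.I by
      push_cast; ring, Complex.exp_ofReal_mul_I_re, Real.cos_neg]
  rw [hHH, hexp]
  exact one_sub_sum_mul_sq_mul_sq_div_two_le_sum_mul_cos _ (fun k _ => Complex.normSq_nonneg _)
    (sum_normSq_apply_eq_one hW i) μ t

-- Sites are indexed from `0`: `J k` couples sites `k` and `k + 1`, so `J 0` is the paper's `J₁`.
def chainHamiltonian (N : ℕ) (J : ℕ → ℝ) : Matrix (Fin N) (Fin N) ℂ :=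
  Matrix.of fun i j =>
    if (i : ℕ) + 1 = (j : ℕ) then (J i : ℂ) else if (j : ℕ) + 1 = (i : ℕ) then (J j : ℂ) else 0

lemma isHermitian_chainHamiltonian (N : ℕ) (J : ℕ → ℝ) : (chainHamiltonian N J).IsHermitian := by
  ext i j
  simp only [chainHamiltonian, conjTranspose_apply, of_apply]
  split_ifs <;> first | omega | simp [Complex.conj_ofReal]

lemma chainHamiltonian_mul_self_apply_zero_zero {N : ℕ} (hN : 1 < N) (J : ℕ → ℝ) :
    (chainHamiltonian N J * chainHamiltonian N J) ⟨0, by omega⟩ ⟨0, by omega⟩ = (J 0 : ℂ) ^ 2 := by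
  rw [mul_apply, Finset.sum_eq_single ⟨1, hN⟩]
  · simp [chainHamiltonian, sq]
  · intro k _ hk
    have hk1 : (k : ℕ) ≠ 1 := fun h => hk (Fin.ext h)
    have h0k : chainHamiltonian N J ⟨0, by omega⟩ k = 0 := by
      rw [chainHamiltonian, of_apply, if_neg (by simpa using hk1.symm), if_neg (by simp)]
    rw [h0k, zero_mul]
  · simp

/-- For a field-free real symmetric tridiagonal chain with perfect state transfer at
time `t₀` (first column of `e^{-iH₀t₀}` is `e^{iφ}` times the last basis vector),
for every `δ`, `|⟨N|e^{-iH₀(t₀+δ)}|1⟩| = |⟨1|e^{-iH₀δ}|1⟩|`, and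
`|⟨N|e^{-iH₀(t₀+δ)}|1⟩| ≥ 1 − J₁²δ²/2`. -/
theorem stmt9 (N : ℕ) (hN : 2 ≤ N) (J : ℕ → ℝ)
    (H : Matrix (Fin N) (Fin N) ℂ)
    (hH : ∀ i j : Fin N, H i j =
      if (i : ℕ) + 1 = (j : ℕ) then (J i : ℂ)
      else if (j : ℕ) + 1 = (i : ℕ) then (J j : ℂ) else 0)
    (t₀ φ : ℝ)
    (hPST : (NormedSpace.exp ((-(Complex.I * t₀)) • H)) *ᵥ
        (Pi.single (⟨0, by omega⟩ : Fin N) 1 : Fin N → ℂ) =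
      Complex.exp (Complex.I * φ) • (Pi.single (⟨N-1, by omega⟩ : Fin N) 1 : Fin N → ℂ)) :
    ∀ δ : ℝ,
      ‖(NormedSpace.exp ((-(Complex.I * (t₀ + δ))) • H))
          ⟨N-1, by omega⟩ ⟨0, by omega⟩‖ =
        ‖(NormedSpace.exp ((-(Complex.I * δ)) • H)) ⟨0, by omega⟩ ⟨0, by omega⟩‖ ∧
      ‖(NormedSpace.exp ((-(Complex.I * (t₀ + δ))) • H))
          ⟨N-1, by omega⟩ ⟨0, by omega⟩‖ ≥ 1 - (J 0)^2 * δ^2 / 2 := by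
  intro δ
  obtain rfl : H = chainHamiltonian N J := Matrix.ext hH
  have hHerm := isHermitian_chainHamiltonian N J
  have hz : ‖Complex.exp (Complex.I * φ)‖ = 1 := by
    rw [mul_comm, Complex.norm_exp_ofReal_mul_I]
  rw [hHerm.exp_apply_of_exp_mulVec_single hz hPST δ, norm_mul, hz, one_mul]
  refine ⟨rfl, ?_⟩
  calc 1 - J 0 ^ 2 * δ ^ 2 / 2
      = 1 - ((chainHamiltonian N J * chainHamiltonian N J) ⟨0, by omega⟩ ⟨0, by omega⟩).re *
          δ ^ 2 / 2 := by
        rw [chainHamiltonian_mul_self_apply_zero_zero (by omega), ← Complex.ofReal_pow,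
          Complex.ofReal_re]
    _ ≤ _ := hHerm.one_sub_mul_self_apply_mul_sq_div_two_le_re_exp_apply _ δ
    _ ≤ _ := Complex.re_le_norm _
end

section
/- For the Krawtchouk chain of length N with couplings Jₙ = J√(n(N−n)), n = 1, …, N−1 (zero diagonal), the eigenvalues of the tridiagonal matrix are J(2k − N + 1) for k = 0, 1, …, N−1, i.e., equally spaced with gap 2J. -/
/-!
The eigenvector for `J (2k - N + 1)` is `uₙ = wₙ / √C(N-1, n)` with `wₙ = [xⁿ] p` for
`p = (1 + x)ᵃ (1 - x)ᵇ`, `a = k`, `b = N - 1 - k`. The ODE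
`(1 - x²) p' = ((a - b) - (a + b) x) p` gives the three-term recurrence
`(n + 1) wₙ₊₁ + (a + b + 1 - n) wₙ₋₁ = (a - b) wₙ`; rescaling by `√C(N-1, n)` symmetrizes it
into exactly the rows of `H`. These `N` eigenvalues are distinct, and an `N × N` matrix has at
most `N` eigenvalues (the roots of its characteristic polynomial).
-/

open Polynomial Matrix

theorem Matrix.mem_spectrum_of_mulVec_eq_smul {K n : Type*} [Field K] [Fintype n] [DecidableEq n]
    {A : Matrix n n K} {v : n → K} {μ : K} (hv : v ≠ 0) (h : A *ᵥ v = μ • v) :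
    μ ∈ spectrum K A := by
  rw [← spectrum_toLin', ← Module.End.hasEigenvalue_iff_mem_spectrum]
  exact Module.End.hasEigenvalue_of_hasEigenvector
    ⟨Module.End.mem_eigenspace_iff.mpr (by rwa [toLin'_apply]), hv⟩

theorem Matrix.ncard_spectrum_le {K n : Type*} [Field K] [Fintype n] [DecidableEq n]
    (A : Matrix n n K) : (spectrum K A).ncard ≤ Fintype.card n := by
  classical
  have hroots : spectrum K A = (A.charpoly.roots.toFinset : Set K) := by
    ext r
    simp [mem_spectrum_iff_isRoot_charpoly, A.charpoly_monic.ne_zero]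
  rw [hroots, Set.ncard_coe_finset, ← A.charpoly_natDegree_eq_dim]
  exact (Multiset.toFinset_card_le _).trans (card_roots' _)

theorem Polynomial.coeff_X_mul_derivative {R : Type*} [Semiring R] (p : R[X]) (n : ℕ) :
    (X * derivative p).coeff n = n * p.coeff n := by
  cases n with
  | zero => simp
  | succ n => rw [coeff_X_mul, coeff_derivative, Nat.cast_comm, Nat.cast_succ]

noncomputable def krawtchoukGenPoly (a b : ℕ) : ℝ[X] := (1 + X) ^ a * (1 - X) ^ b

theorem krawtchoukGenPoly_ode (a b : ℕ) :
    (1 - X ^ 2) * derivative (krawtchoukGenPoly a b) =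
      (C ((a : ℝ) - b) - C ((a : ℝ) + b) * X) * krawtchoukGenPoly a b := by
  rcases a with _ | a <;> rcases b with _ | b <;>
    simp [krawtchoukGenPoly, derivative_mul, derivative_pow] <;> ring

theorem krawtchoukGenPoly_coeff_zero (a b : ℕ) : (krawtchoukGenPoly a b).coeff 0 = 1 := by
  simp [krawtchoukGenPoly, coeff_zero_eq_eval_zero]

theorem krawtchoukGenPoly_coeff_of_lt {a b n : ℕ} (h : a + b < n) :
    (krawtchoukGenPoly a b).coeff n = 0 := by
  apply coeff_eq_zero_of_natDegree_lt
  refine lt_of_le_of_lt ?_ h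
  unfold krawtchoukGenPoly
  compute_degree

theorem krawtchoukGenPoly_coeff_one (a b : ℕ) :
    (krawtchoukGenPoly a b).coeff 1 = (a : ℝ) - b := by
  have h := congrArg (coeff · 0) (krawtchoukGenPoly_ode a b)
  simp only [sub_mul, one_mul, coeff_sub, coeff_C_mul, mul_assoc, coeff_X_mul_zero,
    coeff_derivative, pow_two, krawtchoukGenPoly_coeff_zero] at h
  push_cast at h
  linarith

theorem krawtchoukGenPoly_coeff_succ_succ (a b n : ℕ) :
    ((n : ℝ) + 2) * (krawtchoukGenPoly a b).coeff (n + 2) +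
        ((a : ℝ) + b - n) * (krawtchoukGenPoly a b).coeff n =
      ((a : ℝ) - b) * (krawtchoukGenPoly a b).coeff (n + 1) := by
  have h := congrArg (coeff · (n + 1)) (krawtchoukGenPoly_ode a b)
  simp only [sub_mul, one_mul, coeff_sub, coeff_C_mul, mul_assoc, coeff_X_mul,
    coeff_derivative, pow_two, coeff_X_mul_derivative] at h
  push_cast at h
  linarith

theorem Real.sqrt_mul_mul_sqrt_eq {x y p q : ℝ} (hx : 0 ≤ x) (hy : 0 ≤ y)
    (h : y * p = x * q) :
    √(x * y) * √p = x * √q := by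
  rw [← Real.sqrt_mul (mul_nonneg hx hy), mul_assoc, h, ← mul_assoc,
    Real.sqrt_mul (mul_self_nonneg x), Real.sqrt_mul_self hx]

theorem sub_mul_choose_eq_succ_mul_choose_succ (M n : ℕ) :
    ((M : ℝ) - n) * M.choose n = (n + 1) * M.choose (n + 1) := by
  rcases le_or_gt n M with h | h
  · rw [← Nat.cast_sub h]
    norm_cast
    linarith [Nat.choose_succ_right_eq M n]
  · rw [Nat.choose_eq_zero_of_lt h, Nat.choose_eq_zero_of_lt (by omega)]
    simp

theorem Real.sqrt_choose_pos {M n : ℕ} (h : n ≤ M) : 0 < √(M.choose n : ℝ) :=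
  Real.sqrt_pos.mpr (by exact_mod_cast Nat.choose_pos h)

theorem sqrt_mul_sqrt_choose {M n : ℕ} (h : n ≤ M) :
    √(((n : ℝ) + 1) * (M - n)) * √(M.choose n) = (n + 1) * √(M.choose (n + 1)) :=
  Real.sqrt_mul_mul_sqrt_eq (by positivity) (by simpa using h)
    (sub_mul_choose_eq_succ_mul_choose_succ M n)

theorem sqrt_mul_sqrt_choose_succ {M n : ℕ} (h : n ≤ M) :
    √(((n : ℝ) + 1) * (M - n)) * √(M.choose (n + 1)) = (M - n) * √(M.choose n) := by
  rw [mul_comm ((n : ℝ) + 1)]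
  exact Real.sqrt_mul_mul_sqrt_eq (by simpa using h) (by positivity)
    (sub_mul_choose_eq_succ_mul_choose_succ M n).symm

theorem Matrix.mulVec_apply_of_tridiagonal {R : Type*} [NonAssocSemiring R] {N : ℕ}
    {H : Matrix (Fin N) (Fin N) R} {b : ℕ → R}
    (hH : ∀ i j : Fin N,
      H i j = if (i : ℕ) + 1 = j then b i else if (j : ℕ) + 1 = i then b j else 0)
    (v : ℕ → R) (i : Fin N) :
    (H *ᵥ fun j => v j) i = (if (i : ℕ) + 1 < N then b i * v (i + 1) else 0) +
      (if (i : ℕ) = 0 then 0 else b (i - 1) * v (i - 1)) := by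
  have hsplit : ∀ j : Fin N, H i j * v j =
      (if (i : ℕ) + 1 = j then b i * v (i + 1) else 0) +
        (if (j : ℕ) + 1 = i then b (i - 1) * v (i - 1) else 0) := by
    intro j
    rw [hH]
    by_cases hup : (i : ℕ) + 1 = j
    · rw [if_pos hup, if_pos hup, if_neg (by omega), hup, add_zero]
    · by_cases hdown : (j : ℕ) + 1 = i
      · rw [if_neg hup, if_pos hdown, if_neg hup, if_pos hdown, zero_add,
          show (j : ℕ) = i - 1 by omega]
      · simp [hup, hdown]
  obtain ⟨i, hi⟩ := i
  simp only [mulVec, dotProduct, hsplit, Finset.sum_add_distrib]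
  rw [Fin.sum_univ_eq_sum_range (fun n => if i + 1 = n then b i * v (i + 1) else 0),
    Fin.sum_univ_eq_sum_range (fun n => if n + 1 = i then b (i - 1) * v (i - 1) else 0)]
  cases i with
  | zero => simp
  | succ m => simp [Finset.sum_ite_eq, Finset.sum_ite_eq', show m < N by omega]

noncomputable def krawtchoukCoupling (J : ℝ) (N n : ℕ) : ℝ := J * √((n + 1) * (N - 1 - n))

noncomputable def krawtchoukEigenvector (N k n : ℕ) : ℝ :=
  (krawtchoukGenPoly k (N - 1 - k)).coeff n / √((N - 1).choose n)

section Krawtchouk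

variable {J : ℝ} {N k n : ℕ}

theorem krawtchoukCoupling_mul_eigenvector_succ (h : n + 1 < N) :
    krawtchoukCoupling J N n * krawtchoukEigenvector N k (n + 1) =
      J * (n + 1) * (krawtchoukGenPoly k (N - 1 - k)).coeff (n + 1) /
        √((N - 1).choose n : ℝ) := by
  have hA := sqrt_mul_sqrt_choose (M := N - 1) (n := n) (by omega)
  rw [Nat.cast_pred (by omega)] at hA
  rw [krawtchoukCoupling, krawtchoukEigenvector, mul_div_assoc', div_eq_div_iff
    (Real.sqrt_choose_pos (by omega)).ne' (Real.sqrt_choose_pos (by omega)).ne']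
  linear_combination J * (krawtchoukGenPoly k (N - 1 - k)).coeff (n + 1) * hA

theorem krawtchoukCoupling_mul_eigenvector (h : n + 1 < N) :
    krawtchoukCoupling J N n * krawtchoukEigenvector N k n =
      J * (N - 1 - n) * (krawtchoukGenPoly k (N - 1 - k)).coeff n /
        √((N - 1).choose (n + 1) : ℝ) := by
  have hB := sqrt_mul_sqrt_choose_succ (M := N - 1) (n := n) (by omega)
  rw [Nat.cast_pred (by omega)] at hB
  rw [krawtchoukCoupling, krawtchoukEigenvector, mul_div_assoc', div_eq_div_iff
    (Real.sqrt_choose_pos (by omega)).ne' (Real.sqrt_choose_pos (by omega)).ne']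
  linear_combination J * (krawtchoukGenPoly k (N - 1 - k)).coeff n * hB

theorem krawtchoukEigenvector_eigen_equation (hk : k < N) (hn : n < N) :
    (if n + 1 < N then krawtchoukCoupling J N n * krawtchoukEigenvector N k (n + 1) else 0) +
      (if n = 0 then 0 else krawtchoukCoupling J N (n - 1) * krawtchoukEigenvector N k (n - 1)) =
      J * (2 * k - N + 1) * krawtchoukEigenvector N k n := by
  have hupper : (if n + 1 < N then krawtchoukCoupling J N n * krawtchoukEigenvector N k (n + 1)
      else 0) = J * (n + 1) * (krawtchoukGenPoly k (N - 1 - k)).coeff (n + 1) /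
        √((N - 1).choose n : ℝ) := by
    split_ifs with h
    · exact krawtchoukCoupling_mul_eigenvector_succ h
    · rw [krawtchoukGenPoly_coeff_of_lt (by omega), mul_zero, zero_div]
  have hdeg : ((N - 1 - k : ℕ) : ℝ) = N - 1 - k := by
    rw [Nat.cast_sub (by omega), Nat.cast_pred (by omega)]
  rw [hupper]
  rcases n with _ | m
  · simp only [if_pos, add_zero, zero_add, krawtchoukEigenvector, krawtchoukGenPoly_coeff_one,
      krawtchoukGenPoly_coeff_zero, hdeg, Nat.choose_zero_right]
    ring
  · rw [if_neg m.succ_ne_zero, Nat.add_sub_cancel, krawtchoukCoupling_mul_eigenvector hn,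
      krawtchoukEigenvector, mul_div_assoc', ← add_div]
    congr 1
    have hrec := krawtchoukGenPoly_coeff_succ_succ k (N - 1 - k) m
    rw [hdeg] at hrec
    push_cast
    linear_combination J * hrec

end Krawtchouk

theorem mulVec_krawtchoukEigenvector {N k : ℕ} (hk : k < N) {J : ℝ}
    {H : Matrix (Fin N) (Fin N) ℝ}
    (hH : ∀ i j : Fin N, H i j = if (i : ℕ) + 1 = j then krawtchoukCoupling J N i
      else if (j : ℕ) + 1 = i then krawtchoukCoupling J N j else 0) :
    H *ᵥ (fun i : Fin N => krawtchoukEigenvector N k i) =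
      (J * (2 * k - N + 1)) • fun i : Fin N => krawtchoukEigenvector N k i := by
  ext i
  rw [mulVec_apply_of_tridiagonal hH, krawtchoukEigenvector_eigen_equation hk i.2, Pi.smul_apply,
    smul_eq_mul]

theorem krawtchoukEigenvector_zero (N k : ℕ) : krawtchoukEigenvector N k 0 = 1 := by
  simp [krawtchoukEigenvector, krawtchoukGenPoly_coeff_zero]

theorem stmt10_general (N : ℕ) (J : ℝ) (hJ : 0 < J)
    (H : Matrix (Fin N) (Fin N) ℝ)
    (hH : ∀ i j : Fin N, H i j =
      if (i : ℕ) + 1 = (j : ℕ) then J * Real.sqrt (((i : ℕ) + 1) * (N - 1 - (i : ℕ)))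
      else if (j : ℕ) + 1 = (i : ℕ) then J * Real.sqrt (((j : ℕ) + 1) * (N - 1 - (j : ℕ)))
      else 0) :
    spectrum ℝ H = Set.range (fun k : Fin N => J * (2 * (k : ℕ) - N + 1 : ℝ)) := by
  have hsub : Set.range (fun k : Fin N => J * (2 * (k : ℕ) - N + 1 : ℝ)) ⊆ spectrum ℝ H := by
    rintro _ ⟨k, rfl⟩
    refine mem_spectrum_of_mulVec_eq_smul (fun h => ?_) (mulVec_krawtchoukEigenvector k.2 hH)
    simpa [krawtchoukEigenvector_zero] using congrFun h ⟨0, k.pos⟩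
  have hinj : Function.Injective (fun k : Fin N => J * (2 * (k : ℕ) - N + 1 : ℝ)) := by
    intro k l hkl
    have hshift := mul_left_cancel₀ hJ.ne' hkl
    exact Fin.ext (by exact_mod_cast (by linarith : ((k : ℕ) : ℝ) = l))
  refine (Set.eq_of_subset_of_ncard_le hsub ?_ H.finite_spectrum).symm
  rw [Set.ncard_range_of_injective hinj]
  simpa using H.ncard_spectrum_le

/-- The Krawtchouk chain of length `N` with couplings `Jₙ = J√(n(N−n))` (zero diagonal)
has eigenvalues `J(2k − N + 1)`, `k = 0, …, N−1`: equally spaced with gap `2J`. -/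
theorem stmt10 (N : ℕ) (hN : 2 ≤ N) (J : ℝ) (hJ : 0 < J)
    (H : Matrix (Fin N) (Fin N) ℝ)
    (hH : ∀ i j : Fin N, H i j =
      if (i : ℕ) + 1 = (j : ℕ) then J * Real.sqrt (((i : ℕ) + 1) * (N - 1 - (i : ℕ)))
      else if (j : ℕ) + 1 = (i : ℕ) then J * Real.sqrt (((j : ℕ) + 1) * (N - 1 - (j : ℕ)))
      else 0) :
    spectrum ℝ H = Set.range (fun k : Fin N => J * (2 * (k : ℕ) - N + 1 : ℝ)) :=
  stmt10_general N J hJ H hH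
end

section
/- For any field-free symmetric tridiagonal chain of even length N ≥ 4 with perfect state transfer at time t₀, the first coupling satisfies J₁ ≥ (π√3)/(2t₀); for odd length N ≥ 5, J₁ ≥ π/t₀. -/
open Matrix

lemma intProdNonneg (m : ℤ) : (0:ℝ) ≤ (m:ℝ) * ((m:ℝ)+1) := by
  have h : (0:ℤ) ≤ m * (m+1) := by nlinarith [sq_nonneg (2*m+1)]
  calc (0:ℝ) = ((0:ℤ):ℝ) := by norm_num
  _ ≤ ((m*(m+1) : ℤ) : ℝ) := by exact_mod_cast h
  _ = (m:ℝ) * ((m:ℝ)+1) := by push_cast; ring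

lemma quadA (pp : ℝ) (m : ℤ) :
    (3/4)*pp^2 + pp*(-(pp/2) - m*(2*pp)) ≤ (-(pp/2) - m*(2*pp))^2 := by
  nlinarith [mul_nonneg (sq_nonneg pp) (intProdNonneg m)]

lemma quadB (pp : ℝ) (m : ℤ) :
    (3/4)*pp^2 - pp*((pp/2) - m*(2*pp)) ≤ ((pp/2) - m*(2*pp))^2 := by
  have h := quadA pp (-m)
  push_cast at h ⊢
  nlinarith [h]

lemma quadC (pp : ℝ) (m : ℤ) :
    pp^2 ≤ (-pp - m*(2*pp))^2 := by
  nlinarith [mul_nonneg (sq_nonneg pp) (intProdNonneg m)]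


lemma pointA (t x : ℝ) (ht : 0 < t) (m : ℤ)
    (h : -(t*x) = Real.pi/2 + m*(2*Real.pi)) :
    (3/4)*(Real.pi/t)^2 ≤ x^2 + (-1)*(Real.pi/t)*x := by
  have hm' : t*x = -(Real.pi/2) - m*(2*Real.pi) := by linarith
  have hkey := quadA Real.pi m
  rw [← hm'] at hkey
  have expand : x^2 + (-1)*(Real.pi/t)*x - (3/4)*(Real.pi/t)^2
      = ((t*x)^2 - Real.pi*(t*x) - (3/4)*Real.pi^2)/t^2 := by
    field_simp
    ring
  have hnn : (0:ℝ) ≤ ((t*x)^2 - Real.pi*(t*x) - (3/4)*Real.pi^2)/t^2 :=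
    div_nonneg (by linarith) (by positivity)
  linarith [expand, hnn]

lemma pointB (t x : ℝ) (ht : 0 < t) (m : ℤ)
    (h : -(t*x) = -(Real.pi/2) + m*(2*Real.pi)) :
    (3/4)*(Real.pi/t)^2 ≤ x^2 + 1*(Real.pi/t)*x := by
  have hm' : t*x = (Real.pi/2) - m*(2*Real.pi) := by linarith
  have hkey := quadB Real.pi m
  rw [← hm'] at hkey
  have expand : x^2 + 1*(Real.pi/t)*x - (3/4)*(Real.pi/t)^2
      = ((t*x)^2 + Real.pi*(t*x) - (3/4)*Real.pi^2)/t^2 := by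
    field_simp
  have hnn : (0:ℝ) ≤ ((t*x)^2 + Real.pi*(t*x) - (3/4)*Real.pi^2)/t^2 :=
    div_nonneg (by linarith) (by positivity)
  linarith [expand, hnn]

lemma pointC (t x : ℝ) (ht : 0 < t) (m : ℤ)
    (h : -(t*x) = Real.pi + m*(2*Real.pi)) :
    (Real.pi/t)^2 ≤ x^2 := by
  have hm' : t*x = -Real.pi - m*(2*Real.pi) := by linarith
  have hkey := quadC Real.pi m
  rw [← hm'] at hkey
  have expand : x^2 - (Real.pi/t)^2 = ((t*x)^2 - Real.pi^2)/t^2 := by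
    field_simp
  have hnn : (0:ℝ) ≤ ((t*x)^2 - Real.pi^2)/t^2 :=
    div_nonneg (by linarith) (by positivity)
  linarith [expand, hnn]


/-- For any field-free mirror-symmetric tridiagonal chain of length `N ≥ 4` with
perfect state transfer at time `t₀ > 0`: if `N` is even then `J₁ ≥ π√3/(2t₀)`,
and if `N` is odd (so `N ≥ 5`) then `J₁ ≥ π/t₀`. -/
theorem stmt15 (M : ℕ) (hM : 2 ≤ M) (t₀ : ℝ) (ht₀ : 0 < t₀) (J : ℕ → ℝ)
    (hJpos : ∀ k, k + 1 < M + 2 → 0 < J k)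
    (hJsym : ∀ k, k + 1 < M + 2 → J k = J (M - k))
    (H : Matrix (Fin (M+2)) (Fin (M+2)) ℂ)
    (hH : ∀ i j : Fin (M+2), H i j =
      if (i : ℕ) + 1 = (j : ℕ) then (J i : ℂ)
      else if (j : ℕ) + 1 = (i : ℕ) then (J j : ℂ) else 0)
    (hPST : ‖(NormedSpace.exp ((-(Complex.I * t₀)) • H))
      (Fin.last (M+1)) 0‖ = 1) :
    (Even (M + 2) → J 0 ≥ Real.pi * Real.sqrt 3 / (2 * t₀)) ∧
    (Odd (M + 2) → J 0 ≥ Real.pi / t₀) := by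
  set l : Fin (M+2) := Fin.last (M+1) with hldef
  have hlval : (l : ℕ) = M+1 := rfl
  have hl0 : l ≠ 0 := by
    intro h
    have := congrArg (Fin.val) h
    simp [hlval] at this
  -- symmetry of H
  have hsymm : Hᵀ = H := by
    ext i j
    rw [Matrix.transpose_apply, hH i j, hH j i]
    by_cases h1 : (i:ℕ) + 1 = (j:ℕ) <;> by_cases h2 : (j:ℕ) + 1 = (i:ℕ) <;>
      simp [h1, h2]
    omega
  have hHerm : H.IsHermitian := by
    ext i j
    rw [Matrix.conjTranspose_apply, hH i j, hH j i]
    by_cases h1 : (i:ℕ) + 1 = (j:ℕ) <;> by_cases h2 : (j:ℕ) + 1 = (i:ℕ) <;>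
      simp [h1, h2]
    omega
  -- spectral decomposition
  set V : Matrix (Fin (M+2)) (Fin (M+2)) ℂ :=
    (hHerm.eigenvectorUnitary : Matrix (Fin (M+2)) (Fin (M+2)) ℂ) with hV
  have hVV : Vᴴ * V = 1 := by
    simpa [Matrix.star_eq_conjTranspose] using Unitary.coe_star_mul_self hHerm.eigenvectorUnitary
  have hVV' : V * Vᴴ = 1 := by
    simpa [Matrix.star_eq_conjTranspose] using Unitary.coe_mul_star_self hHerm.eigenvectorUnitary
  set ev : Fin (M+2) → ℝ := hHerm.eigenvalues with hev
  have hspec : H = V * diagonal (fun k => (ev k : ℂ)) * Vᴴ := by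
    rw [hV, hev]
    simpa [Matrix.star_eq_conjTranspose, Function.comp_def] using hHerm.spectral_theorem
  set ε : Fin (M+2) → ℂ := fun k => Complex.exp (-(Complex.I * t₀) * ev k) with hε
  set U : Matrix (Fin (M+2)) (Fin (M+2)) ℂ :=
    NormedSpace.exp ((-(Complex.I * (t₀:ℂ))) • H) with hUdef
  have hU : U = V * diagonal ε * Vᴴ := by
    have hsm : (-(Complex.I * (t₀:ℂ))) • H
        = V * diagonal (fun k => -(Complex.I * t₀) * (ev k : ℂ)) * Vᴴ := by
      rw [hspec, ← Matrix.smul_mul, ← Matrix.mul_smul, ← Matrix.diagonal_smul]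
      congr 2
    rw [hUdef, hsm]
    let vu : (Matrix (Fin (M+2)) (Fin (M+2)) ℂ)ˣ := ⟨V, Vᴴ, hVV', hVV⟩
    have h1 := Matrix.exp_units_conj vu (diagonal (fun k => -(Complex.I * t₀) * (ev k : ℂ)))
    have h2 : (↑vu : Matrix (Fin (M+2)) (Fin (M+2)) ℂ) = V := rfl
    have h3 : (↑vu⁻¹ : Matrix (Fin (M+2)) (Fin (M+2)) ℂ) = Vᴴ := rfl
    rw [h2, h3] at h1
    have h4 : NormedSpace.exp (fun k => -(Complex.I * t₀) * (ev k : ℂ)) = ε :=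
      funext fun k => by rw [Pi.coe_exp, ← Complex.exp_eq_exp_ℂ]
    rw [h1, Matrix.exp_diagonal, h4]
  have hεconj : ∀ k, (starRingEnd ℂ) (ε k) * ε k = 1 := by
    intro k
    rw [hε, ← Complex.exp_conj]
    have h : (starRingEnd ℂ) (-(Complex.I * (t₀:ℂ)) * ((ev k : ℝ):ℂ))
        = -(-(Complex.I * (t₀:ℂ)) * ((ev k : ℝ):ℂ)) := by
      simp [_root_.map_mul, Complex.conj_I, Complex.conj_ofReal]
    rw [h, ← Complex.exp_add, neg_add_cancel, Complex.exp_zero]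
  have hUH : Uᴴ = V * diagonal (fun k => (starRingEnd ℂ) (ε k)) * Vᴴ := by
    calc Uᴴ = (V * diagonal ε * Vᴴ)ᴴ := by rw [hU]
    _ = V * ((diagonal ε)ᴴ * Vᴴ) := by
        rw [Matrix.conjTranspose_mul, Matrix.conjTranspose_mul,
          Matrix.conjTranspose_conjTranspose]
    _ = V * diagonal (fun k => (starRingEnd ℂ) (ε k)) * Vᴴ := by
        rw [Matrix.diagonal_conjTranspose, Matrix.mul_assoc]
        rfl
  have hUunit : Uᴴ * U = 1 := by
    rw [hUH, hU]
    calc (V * diagonal (fun k => (starRingEnd ℂ) (ε k)) * Vᴴ) * (V * diagonal ε * Vᴴ)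
        = V * (diagonal (fun k => (starRingEnd ℂ) (ε k)) * ((Vᴴ * V) * (diagonal ε * Vᴴ))) := by
          simp only [Matrix.mul_assoc]
      _ = V * ((diagonal (fun k => (starRingEnd ℂ) (ε k)) * diagonal ε) * Vᴴ) := by
          rw [hVV, Matrix.one_mul, Matrix.mul_assoc]
      _ = V * Vᴴ := by
          rw [Matrix.diagonal_mul_diagonal]
          have : (fun i => (starRingEnd ℂ) (ε i) * ε i) = fun _ => (1:ℂ) := funext hεconj
          rw [this, Matrix.diagonal_one, Matrix.one_mul]
      _ = 1 := hVV'
  have hUsym : Uᵀ = U := by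
    rw [hUdef, ← Matrix.exp_transpose, Matrix.transpose_smul, hsymm]
  -- PST column structure
  set c : ℂ := U l 0 with hcdef
  have hcabs : Complex.normSq c = 1 := by
    rw [Complex.normSq_eq_norm_sq]
    have : ‖c‖ = 1 := hPST
    rw [this]; norm_num
  have hcolsum : ∀ b : Fin (M+2), ∑ i, Complex.normSq (U i b) = 1 := by
    intro b
    have h1 : (Uᴴ * U) b b = 1 := by rw [hUunit]; simp
    rw [Matrix.mul_apply] at h1
    have h2 : ∀ i, Uᴴ b i * U i b = (Complex.normSq (U i b) : ℂ) := by
      intro i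
      rw [Matrix.conjTranspose_apply, mul_comm, Complex.star_def, Complex.mul_conj]
    rw [Finset.sum_congr rfl (fun i _ => h2 i)] at h1
    exact_mod_cast h1
  have hcol0 : ∀ i, i ≠ l → U i 0 = 0 := by
    intro i hi
    have h1 := hcolsum 0
    have h2 : ∑ i ∈ Finset.univ.erase l, Complex.normSq (U i 0) + Complex.normSq (U l 0)
        = ∑ i, Complex.normSq (U i 0) := Finset.sum_erase_add _ _ (Finset.mem_univ l)
    rw [h1, ← hcdef, hcabs] at h2
    have h3 : ∑ i ∈ Finset.univ.erase l, Complex.normSq (U i 0) = 0 := by linarith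
    have h4 := (Finset.sum_eq_zero_iff_of_nonneg
      (fun i _ => Complex.normSq_nonneg (U i 0))).mp h3 i
      (Finset.mem_erase.mpr ⟨hi, Finset.mem_univ i⟩)
    exact Complex.normSq_eq_zero.mp h4
  have hU0l : U 0 l = c := by
    have h := congrFun (congrFun hUsym 0) l
    rw [Matrix.transpose_apply] at h
    rw [hcdef, ← h]
  have hcoll : ∀ i, i ≠ 0 → U i l = 0 := by
    intro i hi
    have h1 := hcolsum l
    have h2 : ∑ i ∈ Finset.univ.erase (0 : Fin (M+2)), Complex.normSq (U i l)
        + Complex.normSq (U 0 l) = ∑ i, Complex.normSq (U i l) :=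
      Finset.sum_erase_add _ _ (Finset.mem_univ 0)
    rw [h1, hU0l, hcabs] at h2
    have h3 : ∑ i ∈ Finset.univ.erase (0:Fin (M+2)), Complex.normSq (U i l) = 0 := by linarith
    have h4 := (Finset.sum_eq_zero_iff_of_nonneg
      (fun i _ => Complex.normSq_nonneg (U i l))).mp h3 i
      (Finset.mem_erase.mpr ⟨hi, Finset.mem_univ i⟩)
    exact Complex.normSq_eq_zero.mp h4
  -- entry lemmas for H
  have hHrow0 : ∀ j : Fin (M+2), H 0 j = if (j:ℕ) = 1 then (J 0 : ℂ) else 0 := by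
    intro j
    rw [hH]
    rcases eq_or_ne ((j:ℕ)) 1 with h|h
    · rw [if_pos (by simp [h]), if_pos h]
      rfl
    · rw [if_neg (by simp [Ne.symm h]), if_neg (by simp), if_neg h]
  have hHcol0 : ∀ i : Fin (M+2), H i 0 = if (i:ℕ) = 1 then (J 0 : ℂ) else 0 := by
    intro i
    rw [hH]
    rcases eq_or_ne ((i:ℕ)) 1 with h|h
    · rw [if_neg (by simp), if_pos (by simp [h]), if_pos h]
      rfl
    · rw [if_neg (by simp), if_neg (by simp [Ne.symm h]), if_neg h]
  have hHrowl : ∀ j : Fin (M+2), H l j = if (j:ℕ) = M then (J M : ℂ) else 0 := by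
    intro j
    have hj := j.isLt
    rw [hH]
    rcases eq_or_ne ((j:ℕ)) M with h|h
    · rw [if_neg (by rw [hlval]; omega), if_pos (by rw [hlval]; omega), if_pos h, h]
    · rw [if_neg (by rw [hlval]; omega), if_neg (by rw [hlval]; omega), if_neg h]
  have hHcoll : ∀ i : Fin (M+2), H i l = if (i:ℕ) = M then (J M : ℂ) else 0 := by
    intro i
    have hi := i.isLt
    rw [hH]
    rcases eq_or_ne ((i:ℕ)) M with h|h
    · rw [if_pos (by rw [hlval]; omega), if_pos h, h]
    · rw [if_neg (by rw [hlval]; omega), if_neg (by rw [hlval]; omega), if_neg h]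
  -- entries of H*H
  clear_value V ev ε U c
  have hM2 : 1 < M + 2 := by omega
  have hMM2 : M < M + 2 := by omega
  set j1 : Fin (M+2) := ⟨1, hM2⟩ with hj1
  set jM : Fin (M+2) := ⟨M, hMM2⟩ with hjM
  have hone : (j1 : ℕ) = 1 := rfl
  have hMf : (jM : ℕ) = M := rfl
  have hHH00 : (H * H) 0 0 = ((J 0 : ℂ))^2 := by
    rw [Matrix.mul_apply]
    rw [Finset.sum_eq_single j1]
    · rw [hHrow0, hHcol0, hone, if_pos rfl, sq]
    · intro b _ hb
      have hb' : (b:ℕ) ≠ 1 := fun h => hb (Fin.ext (by rw [h, hone]))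
      rw [hHrow0, if_neg hb', zero_mul]
    · intro h; exact absurd (Finset.mem_univ _) h
  have hHHll : (H * H) l l = ((J M : ℂ))^2 := by
    rw [Matrix.mul_apply]
    rw [Finset.sum_eq_single jM]
    · rw [hHrowl, hHcoll, hMf, if_pos rfl, sq]
    · intro b _ hb
      have hb' : (b:ℕ) ≠ M := fun h => hb (Fin.ext (by rw [h, hMf]))
      rw [hHrowl, if_neg hb', zero_mul]
    · intro h; exact absurd (Finset.mem_univ _) h
  have hHH0l : (H * H) 0 l = 0 := by
    rw [Matrix.mul_apply]
    refine Finset.sum_eq_zero fun j _ => ?_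
    rw [hHrow0, hHcoll]
    rcases eq_or_ne ((j:ℕ)) 1 with h|h
    · rw [if_neg (show ¬((j:ℕ) = M) by rw [h]; omega), mul_zero]
    · rw [if_neg (show ¬((j:ℕ) = 1) from h), zero_mul]
  have hHHl0 : (H * H) l 0 = 0 := by
    rw [Matrix.mul_apply]
    refine Finset.sum_eq_zero fun j _ => ?_
    rw [hHrowl, hHcol0]
    rcases eq_or_ne ((j:ℕ)) M with h|h
    · rw [if_neg (show ¬((j:ℕ) = 1) by rw [h]; omega), mul_zero]
    · rw [if_neg (show ¬((j:ℕ) = M) from h), zero_mul]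
  -- the sign matrix S
  have hss : ∀ a:ℕ, ((-1:ℂ))^a * (-1:ℂ)^a = 1 := fun a => by
    rw [← pow_add]; exact Even.neg_one_pow ⟨a, rfl⟩
  set s : Fin (M+2) → ℂ := fun i => (-1)^(i:ℕ) with hs
  have hSS : diagonal s * diagonal s = 1 := by
    rw [Matrix.diagonal_mul_diagonal]
    have : (fun i : Fin (M+2) => s i * s i) = fun _ => (1:ℂ) := funext fun i => hss _
    rw [this, Matrix.diagonal_one]
  have hSHS : diagonal s * H * diagonal s = -H := by
    ext i j
    rw [Matrix.mul_diagonal, Matrix.diagonal_mul, Matrix.neg_apply, hH i j]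
    by_cases h1 : (i:ℕ) + 1 = (j:ℕ)
    · rw [if_pos h1]
      simp only [hs]
      rw [← h1, pow_succ]
      linear_combination (-(J (i:ℕ) : ℂ)) * hss (i:ℕ)
    · rw [if_neg h1]
      by_cases h2 : (j:ℕ) + 1 = (i:ℕ)
      · rw [if_pos h2]
        simp only [hs]
        rw [← h2, pow_succ]
        linear_combination (-(J (j:ℕ) : ℂ)) * hss (j:ℕ)
      · rw [if_neg h2]
        simp
  have hSUS : diagonal s * U * diagonal s = Uᴴ := by
    have hAH : ((-(Complex.I * (t₀:ℂ))) • H)ᴴ = (Complex.I * (t₀:ℂ)) • H := by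
      rw [Matrix.conjTranspose_smul, hHerm]
      congr 1
      simp [Complex.star_def, _root_.map_mul, Complex.conj_I, Complex.conj_ofReal]
    have h1 : Uᴴ = NormedSpace.exp ((Complex.I * (t₀:ℂ)) • H) := by
      rw [hUdef, ← Matrix.exp_conjTranspose, hAH]
    have h2 : diagonal s * ((-(Complex.I * (t₀:ℂ))) • H) * diagonal s
        = (Complex.I * (t₀:ℂ)) • H := by
      have e : diagonal s * (-(Complex.I * (t₀:ℂ)) • H) * diagonal s
          = -(Complex.I * (t₀:ℂ)) • (diagonal s * H * diagonal s) := by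
        rw [Matrix.mul_smul, Matrix.smul_mul]
      rw [e, hSHS, smul_neg, neg_smul, neg_neg]
    let su : (Matrix (Fin (M+2)) (Fin (M+2)) ℂ)ˣ := ⟨diagonal s, diagonal s, hSS, hSS⟩
    have h3 := Matrix.exp_units_conj su ((-(Complex.I * (t₀:ℂ))) • H)
    have e2 : (↑su : Matrix (Fin (M+2)) (Fin (M+2)) ℂ) = diagonal s := rfl
    have e3 : (↑su⁻¹ : Matrix (Fin (M+2)) (Fin (M+2)) ℂ) = diagonal s := rfl
    rw [e2, e3, h2] at h3
    rw [h1, h3, hUdef]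
  -- vectors and weights
  set q : ℂ → Fin (M+2) → ℂ := fun σ k => V 0 k + σ * V l k with hq
  set u : ℂ → Fin (M+2) → ℂ :=
    fun σ i => (if i = 0 then 1 else 0) + σ * (if i = l then 1 else 0) with hu
  have hEntry : ∀ (f : Fin (M+2) → ℂ) (a b : Fin (M+2)),
      (V * diagonal f * Vᴴ) a b = ∑ k, f k * (V a k * (starRingEnd ℂ) (V b k)) := by
    intro f a b
    rw [Matrix.mul_apply]
    refine Finset.sum_congr rfl fun k _ => ?_
    rw [Matrix.mul_diagonal, Matrix.conjTranspose_apply, Complex.star_def]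
    ring
  have hQsum : ∀ (σ : ℂ), (starRingEnd ℂ) σ = σ → ∀ (f : Fin (M+2) → ℂ),
      ∑ k, f k * (q σ k * (starRingEnd ℂ) (q σ k))
        = (V * diagonal f * Vᴴ) 0 0 + σ * (V * diagonal f * Vᴴ) 0 l
          + σ * (V * diagonal f * Vᴴ) l 0 + σ^2 * (V * diagonal f * Vᴴ) l l := by
    intro σ hcσ f
    rw [hEntry, hEntry, hEntry, hEntry,
      Finset.mul_sum, Finset.mul_sum, Finset.mul_sum,
      ← Finset.sum_add_distrib, ← Finset.sum_add_distrib, ← Finset.sum_add_distrib]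
    refine Finset.sum_congr rfl fun k _ => ?_
    simp only [hq, map_add, _root_.map_mul, hcσ]
    ring
  have hH00 : H 0 0 = 0 := by rw [hHcol0 0]; simp
  have hH0l : H 0 l = 0 := by
    rw [hHcoll 0]
    rw [if_neg (show ¬(((0:Fin (M+2)):ℕ) = M) by simp; omega)]
  have hHl0 : H l 0 = 0 := by
    rw [hHcol0 l]
    rw [if_neg (show ¬(((l:Fin (M+2)):ℕ) = 1) by rw [hlval]; omega)]
  have hHll : H l l = 0 := by
    rw [hHcoll l]
    rw [if_neg (show ¬(((l:Fin (M+2)):ℕ) = M) by rw [hlval]; omega)]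
  have hK1 : ∀ σ : ℂ, σ = 1 ∨ σ = -1 → (∑ k, Complex.normSq (q σ k)) = 2 := by
    intro σ hσ
    have hcσ : (starRingEnd ℂ) σ = σ := by rcases hσ with h|h <;> simp [h]
    have hσ2 : σ^2 = 1 := by rcases hσ with h|h <;> rw [h] <;> norm_num
    have h := hQsum σ hcσ (fun _ => (1:ℂ))
    rw [show diagonal (fun _ : Fin (M+2) => (1:ℂ)) = (1 : Matrix (Fin (M+2)) (Fin (M+2)) ℂ)
      from Matrix.diagonal_one] at h
    rw [Matrix.mul_one, hVV'] at h
    rw [Matrix.one_apply_eq, Matrix.one_apply_ne (Ne.symm hl0), Matrix.one_apply_ne hl0,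
      Matrix.one_apply_eq, hσ2] at h
    simp only [one_mul, Complex.mul_conj] at h
    norm_num at h
    exact_mod_cast h
  have hK2 : ∀ σ : ℂ, σ = 1 ∨ σ = -1 → (∑ k, ev k * Complex.normSq (q σ k)) = 0 := by
    intro σ hσ
    have hcσ : (starRingEnd ℂ) σ = σ := by rcases hσ with h|h <;> simp [h]
    have h := hQsum σ hcσ (fun k => ((ev k : ℝ) : ℂ))
    rw [← hspec, hH00, hH0l, hHl0, hHll] at h
    simp only [Complex.mul_conj] at h
    norm_num at h
    exact_mod_cast h
  have hJM : J M = J 0 := by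
    have := hJsym 0 (by omega)
    simpa using this.symm
  have hK3 : ∀ σ : ℂ, σ = 1 ∨ σ = -1 →
      (∑ k, (ev k)^2 * Complex.normSq (q σ k)) = 2 * (J 0)^2 := by
    intro σ hσ
    have hcσ : (starRingEnd ℂ) σ = σ := by rcases hσ with h|h <;> simp [h]
    have hσ2 : σ^2 = 1 := by rcases hσ with h|h <;> rw [h] <;> norm_num
    have hH2 : H * H = V * diagonal (fun k => ((ev k:ℝ):ℂ)^2) * Vᴴ := by
      rw [hspec]
      have e1 : (fun i => ((ev i:ℝ):ℂ) * ((ev i:ℝ):ℂ)) = fun k => ((ev k:ℝ):ℂ)^2 :=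
        funext fun k => (sq _).symm
      simp only [Matrix.mul_assoc]
      rw [← Matrix.mul_assoc Vᴴ V _, hVV, Matrix.one_mul,
        ← Matrix.mul_assoc (diagonal _) (diagonal _) Vᴴ, Matrix.diagonal_mul_diagonal, e1]
    have h := hQsum σ hcσ (fun k => ((ev k:ℝ):ℂ)^2)
    rw [← hH2, hHH00, hHH0l, hHHl0, hHHll, hJM, hσ2] at h
    simp only [Complex.mul_conj] at h
    norm_num at h
    have h2 : ∑ i : Fin (M + 2), ev i ^ 2 * Complex.normSq (q σ i) = J 0 ^ 2 + J 0 ^ 2 := by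
      exact_mod_cast h
    linarith [h2]
  -- eigen relations
  have hmulu : ∀ (W : Matrix (Fin (M+2)) (Fin (M+2)) ℂ) (σ : ℂ) (i : Fin (M+2)),
      (W *ᵥ u σ) i = W i 0 + σ * W i l := by
    intro W σ i
    simp only [Matrix.mulVec, dotProduct, hu, mul_add, mul_ite, mul_one, mul_zero,
      Finset.sum_add_distrib, Finset.sum_ite_eq', Finset.mem_univ, if_true]
    ring
  set ρ : ℂ := (-1)^(M+1) with hρdef
  have hρ1 : ρ = 1 ∨ ρ = -1 := by
    rcases Nat.even_or_odd (M+1) with h|h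
    · left; exact Even.neg_one_pow h
    · right; exact Odd.neg_one_pow h
  have hρ2 : ρ * ρ = 1 := hss (M+1)
  have hSu : ∀ σ : ℂ, diagonal s *ᵥ u σ = u (ρ * σ) := by
    intro σ
    funext i
    rw [Matrix.mulVec_diagonal]
    rcases eq_or_ne i 0 with h0|h0
    · rw [h0]
      simp [hu, hs, (Ne.symm hl0 : (0:Fin (M+2)) ≠ l)]
    rcases eq_or_ne i l with hil|hil
    · rw [hil]
      simp [hu, hs, hl0, hlval, hρdef]
    · simp [hu, hs, h0, hil]
  have hUu : ∀ σ : ℂ, σ = 1 ∨ σ = -1 → U *ᵥ u σ = (σ * c) • u σ := by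
    intro σ hσ
    have hσ2 : σ * σ = 1 := by rcases hσ with h|h <;> rw [h] <;> norm_num
    funext i
    rw [hmulu U σ i]
    rcases eq_or_ne i 0 with h0|h0
    · rw [h0, hcol0 0 (Ne.symm hl0), hU0l]
      simp [hu, (Ne.symm hl0 : (0:Fin (M+2)) ≠ l)]
    rcases eq_or_ne i l with hil|hil
    · rw [hil, ← hcdef, hcoll l hl0]
      simp only [hu, Pi.smul_apply, smul_eq_mul, if_neg hl0, if_pos rfl, if_true]
      linear_combination (-c) * hσ2
    · rw [hcol0 i hil, hcoll i h0]
      simp [hu, h0, hil]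
  have hUHu : ∀ σ : ℂ, σ = 1 ∨ σ = -1 → Uᴴ *ᵥ u σ = (ρ * σ * c) • u σ := by
    intro σ hσ
    have hρσ : ρ * σ = 1 ∨ ρ * σ = -1 := by
      rcases hρ1 with h|h <;> rcases hσ with h'|h' <;> rw [h, h'] <;> norm_num
    calc Uᴴ *ᵥ u σ = (diagonal s * U * diagonal s) *ᵥ u σ := by rw [hSUS]
    _ = diagonal s *ᵥ (U *ᵥ (diagonal s *ᵥ u σ)) := by
        rw [Matrix.mulVec_mulVec, Matrix.mulVec_mulVec]
    _ = diagonal s *ᵥ (U *ᵥ u (ρ * σ)) := by rw [hSu]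
    _ = diagonal s *ᵥ ((ρ * σ * c) • u (ρ * σ)) := by rw [hUu (ρ*σ) hρσ]
    _ = (ρ * σ * c) • (diagonal s *ᵥ u (ρ * σ)) := by rw [Matrix.mulVec_smul]
    _ = (ρ * σ * c) • u (ρ * (ρ * σ)) := by rw [hSu]
    _ = (ρ * σ * c) • u σ := by rw [← mul_assoc ρ ρ σ, hρ2, one_mul]
  have hbq : ∀ σ : ℂ, (starRingEnd ℂ) σ = σ → ∀ k,
      (Vᴴ *ᵥ u σ) k = (starRingEnd ℂ) (q σ k) := by
    intro σ hcσ k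
    rw [hmulu Vᴴ σ k, Matrix.conjTranspose_apply, Matrix.conjTranspose_apply]
    simp only [hq, map_add, _root_.map_mul, hcσ, Complex.star_def]
  have hVU : Vᴴ * U = diagonal ε * Vᴴ := by
    rw [hU, ← Matrix.mul_assoc, ← Matrix.mul_assoc, hVV, Matrix.one_mul]
  have hVUH : Vᴴ * Uᴴ = diagonal (fun k => (starRingEnd ℂ) (ε k)) * Vᴴ := by
    rw [hUH, ← Matrix.mul_assoc, ← Matrix.mul_assoc, hVV, Matrix.one_mul]
  have hK4 : ∀ σ:ℂ, σ = 1 ∨ σ = -1 → ∀ k, q σ k ≠ 0 → ε k = σ * c := by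
    intro σ hσ k hk
    have hcσ : (starRingEnd ℂ) σ = σ := by rcases hσ with h|h <;> simp [h]
    have h1 : Vᴴ *ᵥ (U *ᵥ u σ) = Vᴴ *ᵥ ((σ*c) • u σ) := by rw [hUu σ hσ]
    rw [Matrix.mulVec_mulVec, hVU, ← Matrix.mulVec_mulVec, Matrix.mulVec_smul] at h1
    have h2 := congrFun h1 k
    rw [Matrix.mulVec_diagonal, Pi.smul_apply, smul_eq_mul, hbq σ hcσ k] at h2
    have hnz : (starRingEnd ℂ) (q σ k) ≠ 0 := by simpa [map_eq_zero] using hk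
    exact mul_right_cancel₀ hnz h2
  have hK5 : ∀ σ:ℂ, σ = 1 ∨ σ = -1 → ∀ k, q σ k ≠ 0 →
      (starRingEnd ℂ) (ε k) = ρ * σ * c := by
    intro σ hσ k hk
    have hcσ : (starRingEnd ℂ) σ = σ := by rcases hσ with h|h <;> simp [h]
    have h1 : Vᴴ *ᵥ (Uᴴ *ᵥ u σ) = Vᴴ *ᵥ ((ρ*σ*c) • u σ) := by rw [hUHu σ hσ]
    rw [Matrix.mulVec_mulVec, hVUH, ← Matrix.mulVec_mulVec, Matrix.mulVec_smul] at h1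
    have h2 := congrFun h1 k
    rw [Matrix.mulVec_diagonal, Pi.smul_apply, smul_eq_mul, hbq σ hcσ k] at h2
    have hnz : (starRingEnd ℂ) (q σ k) ≠ 0 := by simpa [map_eq_zero] using hk
    exact mul_right_cancel₀ hnz h2
  have hexq : ∀ σ:ℂ, σ = 1 ∨ σ = -1 → ∃ k, q σ k ≠ 0 := by
    intro σ hσ
    by_contra h
    push_neg at h
    have h0 : ∀ k, Complex.normSq (q σ k) = 0 := fun k => by rw [h k]; simp
    have h1 := hK1 σ hσ
    rw [Finset.sum_congr rfl (fun k _ => h0 k)] at h1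
    simp at h1
  -- lattice extraction
  have hlat : ∀ (k : Fin (M+2)) (w : ℝ), ε k = Complex.exp ((w:ℂ) * Complex.I) →
      ∃ m : ℤ, -(t₀ * ev k) = w + m * (2*Real.pi) := by
    intro k w hw
    rw [hε] at hw
    obtain ⟨m, hm⟩ := Complex.exp_eq_exp_iff_exists_int.mp hw
    refine ⟨m, ?_⟩
    have h2 := congrArg Complex.im hm
    simp [Complex.add_im, Complex.mul_im, Complex.mul_re, Complex.I_re, Complex.I_im,
      Complex.ofReal_re, Complex.ofReal_im, Complex.intCast_re, Complex.intCast_im] at h2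
    linarith [h2]
  have hIhalf : Complex.I = Complex.exp (((Real.pi/2 : ℝ):ℂ) * Complex.I) := by
    rw [Complex.exp_mul_I]
    simp [← Complex.ofReal_cos, ← Complex.ofReal_sin]
  have hIhalf' : -Complex.I = Complex.exp (((-(Real.pi/2) : ℝ):ℂ) * Complex.I) := by
    rw [Complex.exp_mul_I]
    simp [← Complex.ofReal_cos, ← Complex.ofReal_sin]
  have hmone : (-1 : ℂ) = Complex.exp (((Real.pi : ℝ):ℂ) * Complex.I) :=
    Complex.exp_pi_mul_I.symm
  -- summation bounds
  have hfinal : ∀ σ : ℂ, σ = 1 ∨ σ = -1 → ∀ η : ℝ,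
      (∀ k, q σ k ≠ 0 → (3/4)*(Real.pi/t₀)^2 ≤ ev k^2 + η*(Real.pi/t₀)*ev k) →
      (3/2)*(Real.pi/t₀)^2 ≤ 2*(J 0)^2 := by
    intro σ hσ η hpt
    have hsum : ∑ k, (3/4)*(Real.pi/t₀)^2 * Complex.normSq (q σ k)
        ≤ ∑ k, (ev k^2 + η*(Real.pi/t₀)*ev k) * Complex.normSq (q σ k) := by
      refine Finset.sum_le_sum fun k _ => ?_
      rcases eq_or_ne (q σ k) 0 with h|h
      · rw [h]; simp
      · exact mul_le_mul_of_nonneg_right (hpt k h) (Complex.normSq_nonneg _)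
    rw [← Finset.mul_sum, hK1 σ hσ] at hsum
    have hexp : ∑ k, (ev k^2 + η*(Real.pi/t₀)*ev k) * Complex.normSq (q σ k)
        = (∑ k, ev k^2 * Complex.normSq (q σ k))
          + η*(Real.pi/t₀) * (∑ k, ev k * Complex.normSq (q σ k)) := by
      rw [Finset.mul_sum, ← Finset.sum_add_distrib]
      exact Finset.sum_congr rfl fun k _ => by ring
    rw [hexp, hK2 σ hσ, hK3 σ hσ, mul_zero, add_zero] at hsum
    linarith [hsum]
  have hfinal2 : ∀ σ : ℂ, σ = 1 ∨ σ = -1 →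
      (∀ k, q σ k ≠ 0 → (Real.pi/t₀)^2 ≤ ev k^2) →
      (Real.pi/t₀)^2 ≤ (J 0)^2 := by
    intro σ hσ hpt
    have hsum : ∑ k, (Real.pi/t₀)^2 * Complex.normSq (q σ k)
        ≤ ∑ k, ev k^2 * Complex.normSq (q σ k) := by
      refine Finset.sum_le_sum fun k _ => ?_
      rcases eq_or_ne (q σ k) 0 with h|h
      · rw [h]; simp
      · exact mul_le_mul_of_nonneg_right (hpt k h) (Complex.normSq_nonneg _)
    rw [← Finset.mul_sum, hK1 σ hσ, hK3 σ hσ] at hsum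
    linarith [hsum]
  have hJ0 : 0 < J 0 := hJpos 0 (by omega)
  have ht2 : (0:ℝ) < t₀^2 := by positivity
  clear_value q u s ρ l j1 jM
  clear hQsum hEntry hmulu hbq hVU hVUH hUu hUHu hSu hSUS hSHS hSS hss hU hUH hUdef
    hUunit hUsym hcolsum hcol0 hcoll hU0l hcdef hPST hεconj hK1 hK2 hK3
  clear hspec hH hsymm hHrow0 hHcol0 hHrowl hHcoll hH00 hH0l hHl0 hHll
    hHH00 hHH0l hHHl0 hHHll hJM hJsym hVV hVV' hV hev
  clear hu hq hs hone hMf hj1 hjM hldef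
  clear U u s j1 jM hHerm H
  constructor
  · -- even length
    intro hEven
    have hρval : ρ = -1 := by
      obtain ⟨r, hr⟩ := hEven
      rw [hρdef]
      exact Odd.neg_one_pow ⟨r-1, by omega⟩
    obtain ⟨k0, hk0⟩ := hexq 1 (Or.inl rfl)
    have he1 : ε k0 = c := by simpa using hK4 1 (Or.inl rfl) k0 hk0
    have he2 : (starRingEnd ℂ) (ε k0) = -c := by
      have h := hK5 1 (Or.inl rfl) k0 hk0
      rw [hρval] at h
      simpa using h
    rw [he1] at he2
    have hre : c.re = 0 := by
      have h := congrArg Complex.re he2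
      simp at h
      linarith
    have him : c.im * c.im = 1 := by
      have h := hcabs
      rw [Complex.normSq_apply, hre] at h
      linarith
    have hceq : c = Complex.I ∨ c = -Complex.I := by
      rcases mul_self_eq_one_iff.mp him with h|h
      · left; apply Complex.ext <;> simp [hre, h]
      · right; apply Complex.ext <;> simp [hre, h]
    have hfin : (3/2)*(Real.pi/t₀)^2 ≤ 2*(J 0)^2 := by
      rcases hceq with hcI|hcI
      · refine hfinal 1 (Or.inl rfl) (-1) (fun k hk => ?_)
        have h4 : ε k = Complex.I := by
          have := hK4 1 (Or.inl rfl) k hk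
          rw [hcI] at this
          simpa using this
        obtain ⟨m, hm⟩ := hlat k (Real.pi/2) (by rw [h4]; exact hIhalf)
        exact pointA t₀ (ev k) ht₀ m hm
      · refine hfinal 1 (Or.inl rfl) 1 (fun k hk => ?_)
        have h4 : ε k = -Complex.I := by
          have := hK4 1 (Or.inl rfl) k hk
          rw [hcI] at this
          simpa using this
        obtain ⟨m, hm⟩ := hlat k (-(Real.pi/2)) (by rw [h4]; exact hIhalf')
        exact pointB t₀ (ev k) ht₀ m hm
    have hfin' : 3*Real.pi^2 ≤ (J 0 * (2*t₀))^2 := by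
      rw [div_pow] at hfin
      have h5 : Real.pi^2 / t₀^2 ≤ (4/3)*(J 0)^2 := by linarith
      have h6 := (div_le_iff₀ ht2).mp h5
      have h7 : (J 0 * (2*t₀))^2 = 4*((J 0)^2*t₀^2) := by ring
      rw [h7]
      linarith [h6]
    rw [ge_iff_le, div_le_iff₀ (by positivity : (0:ℝ) < 2*t₀)]
    calc Real.pi * Real.sqrt 3 = Real.sqrt (3 * Real.pi^2) := by
          rw [Real.sqrt_mul (by norm_num : (0:ℝ) ≤ 3), Real.sqrt_sq Real.pi_pos.le]
          ring
    _ ≤ Real.sqrt ((J 0 * (2*t₀))^2) := Real.sqrt_le_sqrt hfin'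
    _ = J 0 * (2*t₀) := Real.sqrt_sq (by positivity)
  · -- odd length
    intro hOdd
    have hρval : ρ = 1 := by
      obtain ⟨r, hr⟩ := hOdd
      rw [hρdef]
      exact Even.neg_one_pow ⟨r, by omega⟩
    obtain ⟨k0, hk0⟩ := hexq 1 (Or.inl rfl)
    have he1 : ε k0 = c := by simpa using hK4 1 (Or.inl rfl) k0 hk0
    have he2 : (starRingEnd ℂ) (ε k0) = c := by
      have h := hK5 1 (Or.inl rfl) k0 hk0
      rw [hρval] at h
      simpa using h
    rw [he1] at he2
    have him : c.im = 0 := by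
      have h := congrArg Complex.im he2
      simp at h
      linarith
    have hre : c.re * c.re = 1 := by
      have h := hcabs
      rw [Complex.normSq_apply, him] at h
      linarith
    have hceq : c = 1 ∨ c = -1 := by
      rcases mul_self_eq_one_iff.mp hre with h|h
      · left; apply Complex.ext <;> simp [him, h]
      · right; apply Complex.ext <;> simp [him, h]
    have hptgen : ∀ (σ : ℂ), σ = 1 ∨ σ = -1 → (∀ k, q σ k ≠ 0 → ε k = -1) →
        (Real.pi/t₀)^2 ≤ (J 0)^2 := by
      intro σ hσ hval
      refine hfinal2 σ hσ (fun k hk => ?_)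
      obtain ⟨m, hm⟩ := hlat k Real.pi (by rw [hval k hk]; exact hmone)
      exact pointC t₀ (ev k) ht₀ m hm
    have hfin : (Real.pi/t₀)^2 ≤ (J 0)^2 := by
      rcases hceq with hc1|hc1
      · refine hptgen (-1) (Or.inr rfl) (fun k hk => ?_)
        have := hK4 (-1) (Or.inr rfl) k hk
        rw [hc1] at this
        simpa using this
      · refine hptgen 1 (Or.inl rfl) (fun k hk => ?_)
        have := hK4 1 (Or.inl rfl) k hk
        rw [hc1] at this
        simpa using this
    rw [ge_iff_le]
    calc Real.pi / t₀ = Real.sqrt ((Real.pi/t₀)^2) := (Real.sqrt_sq (by positivity)).symm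
    _ ≤ Real.sqrt ((J 0)^2) := Real.sqrt_le_sqrt hfin
    _ = J 0 := Real.sqrt_sq hJ0.le
end

section
/- For an even-length N mirror-symmetric field-free tridiagonal matrix H₀ with eigenvalues λ₁ > ⋯ > λ_N (symmetric about 0), the trace identity Tr(H₀S) = Σₙ (−1)^{n+1} λₙ = 2 J_{N/2} holds, where S is the flip permutation and J_{N/2} is the central coupling. -/
open Matrix Finset

/-- Helper: sum over `Fin N` of a function supported at a single value `c`. -/
lemma sum_fin_single {N : ℕ} (c : ℕ) (f : Fin N → ℝ) :
    (∑ k : Fin N, if (k : ℕ) = c then f k else 0) =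
      if h : c < N then f ⟨c, h⟩ else 0 := by
  split_ifs with h
  · rw [Finset.sum_eq_single (⟨c, h⟩ : Fin N)]
    · simp
    · intro b _ hb
      rw [if_neg]
      intro hbc
      exact hb (Fin.ext hbc)
    · simp
  · apply Finset.sum_eq_zero
    intro k _
    rw [if_neg]
    have := k.isLt
    omega

/-- For an even-length `N = 2M` mirror-symmetric field-free tridiagonal matrix with
positive couplings and eigenvalues `λ₁ > ⋯ > λ_N`, the trace identity
`Tr(H₀S) = Σₙ (−1)^{n+1} λₙ = 2 J_{N/2}` holds, where `S` is the flip and `J_{N/2}`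
the central coupling. -/
theorem stmt16 (M : ℕ) (hM : 1 ≤ M) (J : ℕ → ℝ)
    (hJpos : ∀ k, k + 1 < 2 * M → 0 < J k)
    (H : Matrix (Fin (2 * M)) (Fin (2 * M)) ℝ)
    (hH : ∀ i j : Fin (2 * M), H i j =
      if (i : ℕ) + 1 = (j : ℕ) then J i
      else if (j : ℕ) + 1 = (i : ℕ) then J j else 0)
    (S : Matrix (Fin (2 * M)) (Fin (2 * M)) ℝ)
    (hS : ∀ i j : Fin (2 * M), S i j = if (j : ℕ) = 2 * M - 1 - (i : ℕ) then 1 else 0)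
    (hsym : S * H * S = H)
    (lam : Fin (2 * M) → ℝ) (hanti : StrictAnti lam)
    (v : Fin (2 * M) → Fin (2 * M) → ℝ)
    (heig : ∀ n, H *ᵥ v n = lam n • v n)
    (horth : ∀ m n, v m ⬝ᵥ v n = if m = n then 1 else 0) :
    Matrix.trace (H * S) = ∑ n : Fin (2 * M), (-1 : ℝ)^(n : ℕ) * lam n ∧
      Matrix.trace (H * S) = 2 * J (M - 1) := by
  haveI : NeZero (2 * M) := ⟨by omega⟩
  -- basic symmetry facts
  have Ht : Hᵀ = H := by
    ext i j
    rw [Matrix.transpose_apply, hH, hH]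
    split_ifs <;> first | rfl | (exfalso; omega)
  have St : Sᵀ = S := by
    ext i j
    have hi := i.isLt; have hj := j.isLt
    rw [Matrix.transpose_apply, hS, hS]
    split_ifs <;> first | rfl | (exfalso; omega)
  have SS : S * S = 1 := by
    ext i j
    have hi := i.isLt; have hj := j.isLt
    rw [Matrix.mul_apply]
    rw [Finset.sum_eq_single (⟨2 * M - 1 - (i : ℕ), by omega⟩ : Fin (2 * M))]
    · rw [hS, hS, Matrix.one_apply]
      simp only [Fin.ext_iff, Fin.val_mk]
      split_ifs <;> first | (exfalso; omega) | norm_num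
    · intro b _ hb
      rw [hS, if_neg, zero_mul]
      intro hcond
      exact hb (Fin.ext hcond)
    · simp
  have hHS : H * S = S * H := by
    conv_lhs => rw [← hsym]
    rw [Matrix.mul_assoc (S * H) S S, SS, Matrix.mul_one]
  -- ============ Part 2: trace = 2 J (M-1) ============
  have key2 : Matrix.trace (H * S) = 2 * J (M - 1) := by
    have hdiag : ∀ i : Fin (2 * M), (H * S) i i =
        if (i : ℕ) + 1 = 2 * M - 1 - (i : ℕ) then J i
        else if (2 * M - 1 - (i : ℕ)) + 1 = (i : ℕ) then J (2 * M - 1 - (i : ℕ)) else 0 := by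
      intro i
      have hi := i.isLt
      rw [Matrix.mul_apply]
      rw [Finset.sum_eq_single (⟨2 * M - 1 - (i : ℕ), by omega⟩ : Fin (2 * M))]
      · rw [hS, if_pos (by simp only [Fin.val_mk]; omega), mul_one, hH]
      · intro b _ hb
        rw [hS, if_neg, mul_zero]
        intro hcond
        apply hb; apply Fin.ext
        have := b.isLt
        simp only [Fin.val_mk]
        omega
      · simp
    have hne : (⟨M - 1, by omega⟩ : Fin (2 * M)) ≠ ⟨M, by omega⟩ := by
      simp only [ne_eq, Fin.ext_iff]; omega
    have hsub : ∑ i : Fin (2 * M), (H * S) i i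
        = ∑ i ∈ ({⟨M - 1, by omega⟩, ⟨M, by omega⟩} : Finset (Fin (2 * M))), (H * S) i i := by
      symm
      apply Finset.sum_subset (Finset.subset_univ _)
      intro x _ hx
      have hx' : (x : ℕ) ≠ M - 1 ∧ (x : ℕ) ≠ M := by
        constructor <;> (intro h; apply hx; simp [Fin.ext_iff, h])
      have hxlt := x.isLt
      rw [hdiag]
      split_ifs <;> first | rfl | (exfalso; omega)
    have htr : Matrix.trace (H * S) = ∑ i : Fin (2 * M), (H * S) i i := rfl
    rw [htr, hsub, Finset.sum_pair hne, hdiag, hdiag]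
    rw [if_pos (by simp only [Fin.val_mk]; omega), if_neg (by simp only [Fin.val_mk]; omega),
      if_pos (by simp only [Fin.val_mk]; omega)]
    simp only [Fin.val_mk]
    have e2 : 2 * M - 1 - M = M - 1 := by omega
    rw [e2]
    ring
  -- ============ eigen-decomposition machinery ============
  set V : Matrix (Fin (2 * M)) (Fin (2 * M)) ℝ := Matrix.of v with hV
  have hVVT : V * Vᵀ = 1 := by
    ext m n
    have : (V * Vᵀ) m n = v m ⬝ᵥ v n := rfl
    rw [this, horth, Matrix.one_apply]
  have hVTV : Vᵀ * V = 1 := mul_eq_one_comm.mp hVVT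
  have hHV : H * Vᵀ = Vᵀ * Matrix.diagonal lam := by
    ext i n
    have hl : (H * Vᵀ) i n = (H *ᵥ v n) i := by
      rw [Matrix.mul_apply]; rfl
    rw [hl, heig, Matrix.mul_diagonal]
    have : (lam n • v n) i = lam n * v n i := rfl
    rw [this]
    have : Vᵀ i n = v n i := rfl
    rw [this, mul_comm]
  have hVH : V * H = Matrix.diagonal lam * V := by
    have h := congrArg Matrix.transpose hHV
    rw [Matrix.transpose_mul, Matrix.transpose_mul, Matrix.transpose_transpose, Ht,
      Matrix.diagonal_transpose] at h
    exact h
  have hHpow : ∀ k : ℕ, H ^ k = Vᵀ * Matrix.diagonal (fun n => lam n ^ k) * V := by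
    intro k
    induction k with
    | zero =>
      have hd : (fun n : Fin (2 * M) => lam n ^ 0) = fun _ => (1 : ℝ) := by
        funext n; rw [pow_zero]
      rw [pow_zero, hd, Matrix.diagonal_one, Matrix.mul_one, hVTV]
    | succ k ih =>
      have hdd : Matrix.diagonal (fun n => lam n ^ k) * Matrix.diagonal lam
          = Matrix.diagonal (fun n => lam n ^ (k + 1)) := by
        have he : (fun i : Fin (2 * M) => lam i ^ k * lam i) = fun n => lam n ^ (k + 1) := by
          funext n; rw [pow_succ]
        rw [Matrix.diagonal_mul_diagonal, he]
      rw [pow_succ, ih, Matrix.mul_assoc, hVH, ← Matrix.mul_assoc, Matrix.mul_assoc Vᵀ, hdd]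
  -- band structure of powers
  have hband : ∀ k : ℕ, ∀ j : Fin (2 * M), k < (j : ℕ) → (H ^ k) 0 j = 0 := by
    intro k
    induction k with
    | zero =>
      intro j hj
      rw [pow_zero, Matrix.one_apply, if_neg]
      intro h
      have : ((0 : Fin (2 * M)) : ℕ) = (j : ℕ) := congrArg Fin.val h
      simp at this
      omega
    | succ k ih =>
      intro j hj
      rw [pow_succ, Matrix.mul_apply]
      apply Finset.sum_eq_zero
      intro l _
      rcases lt_or_ge k (l : ℕ) with h | h
      · rw [ih l h, zero_mul]
      · rw [hH, if_neg (by omega), if_neg (by omega), mul_zero]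
  have hdiagk : ∀ k : ℕ, ∀ hk : k < 2 * M, (H ^ k) 0 ⟨k, hk⟩ = ∏ i ∈ Finset.range k, J i := by
    intro k
    induction k with
    | zero =>
      intro hk
      rw [pow_zero, Matrix.one_apply, if_pos]
      · simp
      · apply Fin.ext; simp
    | succ k ih =>
      intro hk
      rw [pow_succ, Matrix.mul_apply]
      rw [Finset.sum_eq_single (⟨k, by omega⟩ : Fin (2 * M))]
      · rw [ih (by omega), hH]
        have e1 : ((⟨k, by omega⟩ : Fin (2 * M)) : ℕ) = k := rfl
        have e2 : ((⟨k + 1, hk⟩ : Fin (2 * M)) : ℕ) = k + 1 := rfl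
        rw [if_pos (by rw [e1, e2])]
        rw [Finset.prod_range_succ, e1]
      · intro b _ hb
        rcases lt_trichotomy ((b : ℕ)) k with h | h | h
        · rw [hH, if_neg (by simp; omega), if_neg (by simp; omega), mul_zero]
        · exact absurd (Fin.ext h) hb
        · rw [hband k b h, zero_mul]
      · simp
  -- the last index
  have h2M : 2 * M - 1 < 2 * M := by omega
  set lastIdx : Fin (2 * M) := ⟨2 * M - 1, h2M⟩ with hlast
  -- moments
  have hmom : ∀ k : ℕ, (∑ n, (v n 0 * v n lastIdx) * lam n ^ k) = (H ^ k) 0 lastIdx := by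
    intro k
    rw [hHpow, Matrix.mul_apply]
    apply Finset.sum_congr rfl
    intro n _
    rw [Matrix.mul_diagonal]
    have e1 : Vᵀ 0 n = v n 0 := rfl
    have e2 : V n lastIdx = v n lastIdx := rfl
    rw [e1, e2]
    ring
  have hmom0 : ∀ k : ℕ, k < 2 * M - 1 → (∑ n, (v n 0 * v n lastIdx) * lam n ^ k) = 0 := by
    intro k hk
    rw [hmom]
    exact hband k lastIdx hk
  have hmomtop : (∑ n, (v n 0 * v n lastIdx) * lam n ^ (2 * M - 1))
      = ∏ i ∈ Finset.range (2 * M - 1), J i := by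
    rw [hmom]
    exact hdiagk (2 * M - 1) h2M
  have hP : 0 < ∏ i ∈ Finset.range (2 * M - 1), J i := by
    apply Finset.prod_pos
    intro i hi
    rw [Finset.mem_range] at hi
    exact hJpos i (by omega)
  -- ============ eigenvectors are flip eigenvectors ============
  set cc : Fin (2 * M) → ℝ := fun n => v n ⬝ᵥ (S *ᵥ v n) with hccdef
  have hcompAll : ∀ x : Fin (2 * M) → ℝ, ∀ i, x i = ∑ m, v m i * (v m ⬝ᵥ x) := by
    intro x i
    have h : Vᵀ *ᵥ (V *ᵥ x) = x := by
      rw [Matrix.mulVec_mulVec, hVTV, Matrix.one_mulVec]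
    conv_lhs => rw [← h]
    rfl
  have horthAll : ∀ n m : Fin (2 * M), m ≠ n → v m ⬝ᵥ (S *ᵥ v n) = 0 := by
    intro n m hm
    have hHw : H *ᵥ (S *ᵥ v n) = lam n • (S *ᵥ v n) := by
      rw [Matrix.mulVec_mulVec, hHS, ← Matrix.mulVec_mulVec, heig, Matrix.mulVec_smul]
    have h1 : v m ⬝ᵥ (H *ᵥ (S *ᵥ v n)) = lam m * (v m ⬝ᵥ (S *ᵥ v n)) := by
      rw [Matrix.dotProduct_mulVec, ← Matrix.mulVec_transpose, Ht, heig]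
      rw [smul_dotProduct]
      rfl
    have h2 : v m ⬝ᵥ (H *ᵥ (S *ᵥ v n)) = lam n * (v m ⬝ᵥ (S *ᵥ v n)) := by
      rw [hHw, dotProduct_smul]
      rfl
    have hlam : lam m ≠ lam n := fun h => hm (hanti.injective h)
    by_contra hx
    exact hlam (mul_right_cancel₀ hx (h1.symm.trans h2))
  have hSv : ∀ n i, (S *ᵥ v n) i = cc n * v n i := by
    intro n i
    rw [hcompAll (S *ᵥ v n) i, Finset.sum_eq_single n]
    · rw [hccdef]; ring
    · intro m _ hm
      rw [horthAll n m hm, mul_zero]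
    · simp
  have hSnorm : ∀ n, (S *ᵥ v n) ⬝ᵥ (S *ᵥ v n) = 1 := by
    intro n
    have h2 : (S *ᵥ v n) ᵥ* S = v n := by
      rw [← Matrix.mulVec_transpose, St, Matrix.mulVec_mulVec, SS, Matrix.one_mulVec]
    rw [Matrix.dotProduct_mulVec, h2, horth, if_pos rfl]
  have hc2 : ∀ n, cc n * cc n = 1 := by
    intro n
    have h1 : (S *ᵥ v n) ⬝ᵥ (S *ᵥ v n) = cc n * cc n := by
      calc (S *ᵥ v n) ⬝ᵥ (S *ᵥ v n) = ∑ i, (S *ᵥ v n) i * (S *ᵥ v n) i := rfl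
        _ = ∑ i, cc n * cc n * (v n i * v n i) := by
            apply Finset.sum_congr rfl
            intro i _
            rw [hSv n i]; ring
        _ = cc n * cc n * ∑ i, v n i * v n i := by rw [← Finset.mul_sum]
        _ = cc n * cc n * (v n ⬝ᵥ v n) := rfl
        _ = cc n * cc n := by rw [horth, if_pos rfl, mul_one]
    rw [← h1, hSnorm]
  -- first component nonzero
  have hv0 : ∀ n, v n 0 ≠ 0 := by
    intro n h0
    have hrowEq : ∀ i : Fin (2 * M),
        (∑ k : Fin (2 * M), (if (k : ℕ) = (i : ℕ) + 1 then J i * v n k else 0))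
        + (∑ k : Fin (2 * M), (if (k : ℕ) + 1 = (i : ℕ) then J k * v n k else 0))
        = lam n * v n i := by
      intro i
      have h := congrFun (heig n) i
      have hl : (H *ᵥ v n) i = ∑ k, H i k * v n k := rfl
      have hr : (lam n • v n) i = lam n * v n i := rfl
      rw [hl, hr] at h
      rw [← h, ← Finset.sum_add_distrib]
      apply Finset.sum_congr rfl
      intro k _
      rw [hH]
      split_ifs <;> first | ring1 | (exfalso; omega)
    have key : ∀ t : ℕ, ∀ ht : t < 2 * M, v n ⟨t, ht⟩ = 0 := by
      intro t
      induction t using Nat.strong_induction_on with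
      | _ t IH =>
        match t with
        | 0 =>
          intro ht
          have : (⟨0, ht⟩ : Fin (2 * M)) = 0 := by apply Fin.ext; simp
          rw [this]; exact h0
        | (s + 1) =>
          intro ht
          have hrow := hrowEq ⟨s, by omega⟩
          have es : ((⟨s, by omega⟩ : Fin (2 * M)) : ℕ) = s := rfl
          have h2 : (∑ k : Fin (2 * M),
              (if (k : ℕ) + 1 = ((⟨s, by omega⟩ : Fin (2 * M)) : ℕ) then J k * v n k else 0)) = 0 := by
            apply Finset.sum_eq_zero
            intro k _
            split_ifs with hk
            · rw [es] at hk
              have hvk : v n k = 0 := by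
                have := IH (k : ℕ) (by omega) k.isLt
                rwa [Fin.eta] at this
              rw [hvk, mul_zero]
            · rfl
          have h1 : (∑ k : Fin (2 * M),
              (if (k : ℕ) = ((⟨s, by omega⟩ : Fin (2 * M)) : ℕ) + 1 then
                J (⟨s, by omega⟩ : Fin (2 * M)) * v n k else 0))
              = J s * v n ⟨s + 1, ht⟩ := by
            rw [es]
            rw [sum_fin_single (s + 1) (fun k => J s * v n k)]
            rw [dif_pos ht]
          have hvs : v n ⟨s, by omega⟩ = 0 := IH s (by omega) (by omega)
          rw [h1, h2, hvs, add_zero, mul_zero] at hrow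
          have hJ : 0 < J s := hJpos s ht
          have := mul_eq_zero.mp hrow
          rcases this with h | h
          · exact absurd h (ne_of_gt hJ)
          · exact h
    have hall : ∀ i : Fin (2 * M), v n i = 0 := by
      intro i
      have := key (i : ℕ) i.isLt
      rwa [Fin.eta] at this
    have : v n ⬝ᵥ v n = 0 := by
      simp [dotProduct, hall]
    rw [horth, if_pos rfl] at this
    norm_num at this
  -- ============ Lagrange sign argument ============
  have hsign : ∀ n : Fin (2 * M), 0 < (-1 : ℝ) ^ (n : ℕ) * (v n 0 * v n lastIdx) := by
    intro n
    classical
    set q : Polynomial ℝ := ∏ m ∈ univ.erase n, (Polynomial.X - Polynomial.C (lam m)) with hq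
    have hqmonic : q.Monic :=
      Polynomial.monic_prod_of_monic _ _ fun m _ => Polynomial.monic_X_sub_C _
    have hcard : (univ.erase n).card = 2 * M - 1 := by
      rw [Finset.card_erase_of_mem (mem_univ n), Finset.card_univ, Fintype.card_fin]
    have hqdeg : q.natDegree = 2 * M - 1 := by
      rw [hq, Polynomial.natDegree_prod _ _ (fun m _ => Polynomial.X_sub_C_ne_zero _)]
      simp only [Polynomial.natDegree_X_sub_C]
      rw [Finset.sum_const, smul_eq_mul, mul_one, hcard]
    have heval0 : ∀ m, m ≠ n → q.eval (lam m) = 0 := by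
      intro m hm
      rw [hq, Polynomial.eval_prod]
      apply Finset.prod_eq_zero (Finset.mem_erase.mpr ⟨hm, mem_univ m⟩)
      simp
    have hsum1 : (∑ m, (v m 0 * v m lastIdx) * q.eval (lam m))
        = (v n 0 * v n lastIdx) * q.eval (lam n) := by
      rw [Finset.sum_eq_single n]
      · intro m _ hm
        rw [heval0 m hm, mul_zero]
      · simp
    have hev : ∀ m : Fin (2 * M), q.eval (lam m)
        = ∑ k ∈ Finset.range (2 * M), q.coeff k * lam m ^ k := by
      intro m
      rw [Polynomial.eval_eq_sum_range, hqdeg]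
      have : 2 * M - 1 + 1 = 2 * M := by omega
      rw [this]
    have hsum2 : (∑ m, (v m 0 * v m lastIdx) * q.eval (lam m))
        = ∏ i ∈ Finset.range (2 * M - 1), J i := by
      calc (∑ m, (v m 0 * v m lastIdx) * q.eval (lam m))
          = ∑ m, ∑ k ∈ Finset.range (2 * M),
              q.coeff k * ((v m 0 * v m lastIdx) * lam m ^ k) := by
            apply Finset.sum_congr rfl
            intro m _
            rw [hev m, Finset.mul_sum]
            apply Finset.sum_congr rfl
            intro k _
            ring
        _ = ∑ k ∈ Finset.range (2 * M),
              q.coeff k * ∑ m, (v m 0 * v m lastIdx) * lam m ^ k := by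
            rw [Finset.sum_comm]
            apply Finset.sum_congr rfl
            intro k _
            rw [Finset.mul_sum]
        _ = ∏ i ∈ Finset.range (2 * M - 1), J i := by
            have hr : Finset.range (2 * M) = Finset.range ((2 * M - 1) + 1) := by
              congr 1; omega
            rw [hr, Finset.sum_range_succ]
            have hz : (∑ k ∈ Finset.range (2 * M - 1),
                q.coeff k * ∑ m, (v m 0 * v m lastIdx) * lam m ^ k) = 0 := by
              apply Finset.sum_eq_zero
              intro k hk
              rw [Finset.mem_range] at hk
              rw [hmom0 k hk, mul_zero]
            rw [hz, zero_add, hmomtop]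
            have hc1 : q.coeff (2 * M - 1) = 1 := by
              have := hqmonic.coeff_natDegree
              rwa [hqdeg] at this
            rw [hc1, one_mul]
    have hwq : (v n 0 * v n lastIdx) * q.eval (lam n)
        = ∏ i ∈ Finset.range (2 * M - 1), J i := by
      rw [← hsum1, hsum2]
    -- sign of q.eval (lam n)
    have hevaln : q.eval (lam n) = ∏ m ∈ univ.erase n, (lam n - lam m) := by
      rw [hq, Polynomial.eval_prod]
      apply Finset.prod_congr rfl
      intro m _
      simp
    have hsplit : univ.erase n = (univ.filter (· < n)) ∪ (univ.filter (n < ·)) := by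
      ext m
      simp only [Finset.mem_erase, Finset.mem_union, Finset.mem_filter, Finset.mem_univ,
        true_and, and_true, ne_eq]
      constructor
      · intro h; exact lt_or_gt_of_ne h
      · rintro (h | h)
        · exact ne_of_lt h
        · exact ne_of_gt h
    have hdisj : Disjoint (univ.filter (· < n)) (univ.filter (n < ·)) := by
      rw [Finset.disjoint_left]
      intro a ha hb
      rw [Finset.mem_filter] at ha hb
      exact absurd hb.2 (not_lt_of_gt ha.2)
    have hcardlt : (univ.filter (· < n)).card = (n : ℕ) := by
      have : univ.filter (· < n) = Finset.Iio n := by ext x; simp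
      rw [this, Fin.card_Iio]
    have hprodlt : ∏ m ∈ univ.filter (· < n), (lam n - lam m)
        = (-1 : ℝ) ^ (n : ℕ) * ∏ m ∈ univ.filter (· < n), (lam m - lam n) := by
      calc ∏ m ∈ univ.filter (· < n), (lam n - lam m)
          = ∏ m ∈ univ.filter (· < n), (-1 : ℝ) * (lam m - lam n) := by
            apply Finset.prod_congr rfl
            intro m _
            ring
        _ = (-1 : ℝ) ^ (n : ℕ) * ∏ m ∈ univ.filter (· < n), (lam m - lam n) := by
            rw [Finset.prod_mul_distrib, Finset.prod_const, hcardlt]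
    have hpos1 : 0 < ∏ m ∈ univ.filter (· < n), (lam m - lam n) := by
      apply Finset.prod_pos
      intro m hm
      rw [Finset.mem_filter] at hm
      have := hanti hm.2
      linarith
    have hpos2 : 0 < ∏ m ∈ univ.filter (n < ·), (lam n - lam m) := by
      apply Finset.prod_pos
      intro m hm
      rw [Finset.mem_filter] at hm
      have := hanti hm.2
      linarith
    have hqe : 0 < (-1 : ℝ) ^ (n : ℕ) * q.eval (lam n) := by
      rw [hevaln, hsplit, Finset.prod_union hdisj, hprodlt]
      have h11 : (-1 : ℝ) ^ (n : ℕ) * ((-1 : ℝ) ^ (n : ℕ) *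
          (∏ m ∈ univ.filter (· < n), (lam m - lam n)) * ∏ m ∈ univ.filter (n < ·), (lam n - lam m))
          = ((-1 : ℝ) ^ (n : ℕ) * (-1 : ℝ) ^ (n : ℕ)) *
            ((∏ m ∈ univ.filter (· < n), (lam m - lam n)) * ∏ m ∈ univ.filter (n < ·), (lam n - lam m)) := by
        ring
      rw [h11, ← mul_pow]
      norm_num
      exact mul_pos hpos1 hpos2
    -- combine: w n * e = P > 0 and (-1)^n * e > 0 imply (-1)^n * w n > 0
    have hwe : 0 < (v n 0 * v n lastIdx) * q.eval (lam n) := by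
      rw [hwq]; exact hP
    nlinarith [mul_pos hqe hwe, mul_self_nonneg (q.eval (lam n))]
  -- cc n = (-1)^n
  have hSv0 : ∀ n, (S *ᵥ v n) 0 = v n lastIdx := by
    intro n
    have h : (S *ᵥ v n) 0 = ∑ k, S 0 k * v n k := rfl
    rw [h, Finset.sum_eq_single lastIdx]
    · rw [hS, if_pos, one_mul]
      simp [hlast]
    · intro b _ hb
      rw [hS, if_neg, zero_mul]
      intro hcond
      apply hb; apply Fin.ext
      simp at hcond
      simp [hlast, hcond]
    · simp
  have hccval : ∀ n : Fin (2 * M), cc n = (-1 : ℝ) ^ (n : ℕ) := by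
    intro n
    have hvlast : v n lastIdx = cc n * v n 0 := by
      rw [← hSv0 n, hSv n 0]
    have hwcc : v n 0 * v n lastIdx = cc n * (v n 0 * v n 0) := by
      rw [hvlast]; ring
    have hs := hsign n
    rw [hwcc] at hs
    have hv02 : 0 < v n 0 * v n 0 := by
      rcases lt_or_gt_of_ne (hv0 n) with h | h
      · nlinarith
      · nlinarith
    have hxpos : 0 < (-1 : ℝ) ^ (n : ℕ) * cc n := by nlinarith
    have hx2 : ((-1 : ℝ) ^ (n : ℕ) * cc n) * ((-1 : ℝ) ^ (n : ℕ) * cc n) = 1 := by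
      have h1 : ((-1 : ℝ) ^ (n : ℕ) * cc n) * ((-1 : ℝ) ^ (n : ℕ) * cc n)
          = ((-1 : ℝ) ^ (n : ℕ) * (-1 : ℝ) ^ (n : ℕ)) * (cc n * cc n) := by ring
      rw [h1, ← mul_pow, hc2 n]
      norm_num
    have hx1 : (-1 : ℝ) ^ (n : ℕ) * cc n = 1 := by nlinarith
    calc cc n = ((-1 : ℝ) ^ (n : ℕ) * (-1 : ℝ) ^ (n : ℕ)) * cc n := by
          rw [← mul_pow]; norm_num
      _ = (-1 : ℝ) ^ (n : ℕ) * ((-1 : ℝ) ^ (n : ℕ) * cc n) := by ring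
      _ = (-1 : ℝ) ^ (n : ℕ) := by rw [hx1, mul_one]
  -- ============ Part 1 ============
  have key1 : Matrix.trace (H * S) = ∑ n : Fin (2 * M), (-1 : ℝ) ^ (n : ℕ) * lam n := by
    have hHdec : H = Vᵀ * Matrix.diagonal lam * V := by
      have := hHpow 1
      simpa [pow_one] using this
    have hVSV : ∀ n, (V * S * Vᵀ) n n = cc n := by
      intro n
      rw [Matrix.mul_assoc]
      rfl
    have htr2 : Matrix.trace (H * S) = ∑ n, (V * S * Vᵀ) n n * lam n := by
      conv_lhs => rw [hHdec]
      rw [Matrix.mul_assoc (Vᵀ * Matrix.diagonal lam) V S]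
      rw [Matrix.trace_mul_cycle Vᵀ (Matrix.diagonal lam) (V * S)]
      have : Matrix.trace (V * S * Vᵀ * Matrix.diagonal lam)
          = ∑ n, (V * S * Vᵀ * Matrix.diagonal lam) n n := rfl
      rw [this]
      apply Finset.sum_congr rfl
      intro m _
      rw [Matrix.mul_diagonal]
    rw [htr2]
    apply Finset.sum_congr rfl
    intro n _
    rw [hVSV n, hccval n, mul_comm]
  exact ⟨key1, key2⟩
end

section
/- Let H₀ be an odd-length N mirror-symmetric field-free tridiagonal chain with PST at time t₀, and θ ∈ ℝ. Define H̃ by replacing the two central couplings: J_{(N−1)/2} → √2 cos θ · J_{(N−1)/2} and J_{(N+1)/2} → √2 sin θ · J_{(N+1)/2}, keeping all other couplings. Then e^{-iH̃t₀}|1⟩ = e^{iφ}(cos 2θ |1⟩ + sin 2θ |N⟩) up to phases, i.e., H̃ exhibits fractional revival at time t₀ with amplitudes cos 2θ and sin 2θ on sites 1 and N. -/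
/-!
Let `U` fix the central site and act on each mirror pair of sites `{k, N - 1 - k}` as the
reflection `[[cos ψ, sin ψ], [sin ψ, -cos ψ]]`, where `ψ = θ + π/4`, so that
`cos ψ + sin ψ = √2 cos θ` and `sin ψ - cos ψ = √2 sin θ`. An entrywise computation then gives
`H̃ = U H₀ U`, and since `U² = 1` also `e^{-iH̃t₀} = U e^{-iH₀t₀} U`. Mirror symmetry makes `H₀`
commute with the reflection of the chain, so perfect state transfer also sends `|N⟩` to
`e^{iφ}|1⟩`. Hence `U|1⟩ = cos ψ |1⟩ + sin ψ |N⟩` evolves to `e^{iφ}(cos ψ |N⟩ + sin ψ |1⟩)`,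
which `U` maps to `e^{iφ}(sin 2ψ |1⟩ - cos 2ψ |N⟩) = e^{iφ}(cos 2θ |1⟩ + sin 2θ |N⟩)`.
-/

open Matrix

namespace FractionalRevival

section LinearAlgebra

variable {m : Type*} [Fintype m]

lemma exp_conj_of_mul_self_eq_one {𝔸 : Type*} [DecidableEq m] [NormedCommRing 𝔸]
    [NormedAlgebra ℚ 𝔸] [CompleteSpace 𝔸] {U : Matrix m m 𝔸} (hU : U * U = 1)
    (A : Matrix m m 𝔸) :
    NormedSpace.exp (U * A * U) = U * NormedSpace.exp A * U := by
  have hinv : U⁻¹ = U := inv_eq_right_inv hU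
  simpa only [hinv] using exp_conj U A (.of_mul_eq_one U hU)

variable {R : Type*} [CommRing R] {u v : m → R}

lemma mulVec_eq_smul_of_commute {E P : Matrix m m R} (hEP : Commute E P) {c : R}
    (hPu : P *ᵥ u = v) (hPv : P *ᵥ v = u) (hE : E *ᵥ u = c • v) : E *ᵥ v = c • u := by
  rw [← hPu, mulVec_mulVec, hEP.eq, ← mulVec_mulVec, hE, mulVec_smul, hPv]

lemma mul_mul_mulVec_of_swap {U E : Matrix m m R} {a b c : R}
    (hUu : U *ᵥ u = a • u + b • v) (hUv : U *ᵥ v = b • u - a • v)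
    (hEu : E *ᵥ u = c • v) (hEv : E *ᵥ v = c • u) :
    (U * E * U) *ᵥ u = c • ((2 * a * b) • u + (b ^ 2 - a ^ 2) • v) := by
  simp only [← mulVec_mulVec, hUu, mulVec_add, mulVec_smul, hEu, hEv, hUv]
  module

end LinearAlgebra

lemma cos_sin_add_pi_div_four_identities {θ a b : ℝ} (ha : a = Real.cos (θ + Real.pi / 4))
    (hb : b = Real.sin (θ + Real.pi / 4)) :
    a ^ 2 + b ^ 2 = 1 ∧ a + b = √2 * Real.cos θ ∧ b - a = √2 * Real.sin θ ∧
      2 * a * b = Real.cos (2 * θ) ∧ b ^ 2 - a ^ 2 = Real.sin (2 * θ) := by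
  have h2 : √2 ^ 2 = 2 := Real.sq_sqrt zero_le_two
  have hθ := Real.sin_sq_add_cos_sq θ
  refine ⟨ha ▸ hb ▸ Real.cos_sq_add_sin_sq _, ?_, ?_, ?_, ?_⟩ <;>
    simp only [ha, hb, Real.cos_add, Real.sin_add, Real.cos_pi_div_four, Real.sin_pi_div_four,
      Real.cos_two_mul, Real.sin_two_mul]
  · ring
  · ring
  · linear_combination (Real.cos θ ^ 2 - Real.sin θ ^ 2) / 2 * h2 - hθ
  · linear_combination Real.sin θ * Real.cos θ * h2

def jacobiMatrix (n : ℕ) (J : ℕ → ℝ) : Matrix (Fin n) (Fin n) ℂ :=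
  of fun i j => if (i : ℕ) + 1 = j then (J i : ℂ) else if (j : ℕ) + 1 = i then (J j : ℂ) else 0

section MirrorMix

variable {M : ℕ} {a b : ℝ}

def mirrorMixDiag (M : ℕ) (a : ℝ) (i : Fin (2 * M + 1)) : ℂ :=
  if (i : ℕ) < M then a else if (i : ℕ) = M then 1 else -a

/-- On each mirror pair `{i, i.rev}` with `i < M` this acts as `[[a, b], [b, -a]]`; it fixes the
central site `M`. In particular `mirrorMix M 0 1` is the reflection `i ↦ i.rev` of the chain. -/
def mirrorMix (M : ℕ) (a b : ℝ) : Matrix (Fin (2 * M + 1)) (Fin (2 * M + 1)) ℂ :=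
  of fun i j =>
    (if j = i then mirrorMixDiag M a i else 0) + (if j = i.rev ∧ j ≠ i then (b : ℂ) else 0)

lemma mirrorMix_mul_apply (X : Matrix (Fin (2 * M + 1)) (Fin (2 * M + 1)) ℂ) (i j) :
    (mirrorMix M a b * X) i j =
      mirrorMixDiag M a i * X i j + if i.rev ≠ i then b * X i.rev j else 0 := by
  simp only [mul_apply, mirrorMix, of_apply, add_mul, Finset.sum_add_distrib, ite_mul, zero_mul]
  simp [ite_and, ne_comm]

lemma mul_mirrorMix_apply (X : Matrix (Fin (2 * M + 1)) (Fin (2 * M + 1)) ℂ) (i j) :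
    (X * mirrorMix M a b) i j =
      X i j * mirrorMixDiag M a j + if j.rev ≠ j then X i j.rev * b else 0 := by
  have hrev (k : Fin (2 * M + 1)) : j = k.rev ↔ k = j.rev := by rw [eq_comm, Fin.rev_eq_iff]
  simp only [mul_apply, mirrorMix, of_apply, mul_add, Finset.sum_add_distrib, mul_ite, mul_zero]
  simp [hrev, ite_and, eq_comm (a := j)]

lemma mirrorMix_mul_self (hab : a ^ 2 + b ^ 2 = 1) :
    mirrorMix M a b * mirrorMix M a b = 1 := by
  have habC : (a : ℂ) ^ 2 + (b : ℂ) ^ 2 = 1 := by exact_mod_cast hab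
  ext ⟨p, hp⟩ ⟨q, hq⟩
  rw [mirrorMix_mul_apply]
  simp only [mirrorMix, mirrorMixDiag, of_apply, one_apply, Fin.val_rev, Fin.ext_iff, ne_eq]
  grind

/-- Away from the centre both sides agree entrywise by mirror symmetry of `J`; at the centre the
modified couplings `(a + b) J`, `(b - a) J` recombine through `a ^ 2 + b ^ 2 = 1` and
`J (M - 1) = J M`. -/
lemma jacobiMatrix_mul_mirrorMix (hab : a ^ 2 + b ^ 2 = 1) {J Jt : ℕ → ℝ}
    (hJ : ∀ k l, k + l + 1 = 2 * M → J k = J l)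
    (hJt : ∀ k, Jt k =
      if k = M - 1 then (a + b) * J k else if k = M then (b - a) * J k else J k) :
    jacobiMatrix _ Jt * mirrorMix M a b = mirrorMix M a b * jacobiMatrix _ J := by
  have habC : (a : ℂ) ^ 2 + (b : ℂ) ^ 2 = 1 := by exact_mod_cast hab
  ext ⟨p, hp⟩ ⟨q, hq⟩
  rw [mul_mirrorMix_apply, mirrorMix_mul_apply]
  simp only [jacobiMatrix, mirrorMixDiag, of_apply, Fin.val_rev, hJt, Fin.ext_iff, ne_eq,
    apply_ite Complex.ofReal, Complex.ofReal_mul, Complex.ofReal_add, Complex.ofReal_sub]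
  grind (splits := 40)

lemma mirrorMix_mulVec_single_zero (hM : 1 ≤ M) :
    mirrorMix M a b *ᵥ Pi.single 0 1 =
      (a : ℂ) • Pi.single 0 1 + (b : ℂ) • Pi.single (Fin.last _) 1 := by
  ext ⟨p, hp⟩
  simp only [mulVec_single_one, col_apply, mirrorMix, mirrorMixDiag, of_apply, Pi.add_apply,
    Pi.smul_apply, Pi.single_apply, smul_eq_mul, Fin.ext_iff, Fin.val_rev, Fin.val_last,
    Fin.val_zero]
  grind

lemma mirrorMix_mulVec_single_last (hM : 1 ≤ M) :
    mirrorMix M a b *ᵥ Pi.single (Fin.last _) 1 =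
      (b : ℂ) • Pi.single 0 1 - (a : ℂ) • Pi.single (Fin.last _) 1 := by
  ext ⟨p, hp⟩
  simp only [mulVec_single_one, col_apply, mirrorMix, mirrorMixDiag, of_apply, Pi.sub_apply,
    Pi.smul_apply, Pi.single_apply, smul_eq_mul, Fin.ext_iff, Fin.val_rev, Fin.val_last,
    Fin.val_zero]
  grind

end MirrorMix

end FractionalRevival

open FractionalRevival in
theorem stmt17_general (M : ℕ) (hM : 1 ≤ M) (t₀ φ θ : ℝ)
    (J : ℕ → ℝ)
    (hJsym : ∀ k, k + 1 < 2 * M + 1 → J k = J (2 * M - 1 - k))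
    (H : Matrix (Fin (2 * M + 1)) (Fin (2 * M + 1)) ℂ)
    (hH : ∀ i j : Fin (2 * M + 1), H i j =
      if (i : ℕ) + 1 = (j : ℕ) then (J i : ℂ)
      else if (j : ℕ) + 1 = (i : ℕ) then (J j : ℂ) else 0)
    (hPST : (NormedSpace.exp ((-(Complex.I * t₀)) • H)) *ᵥ
        (Pi.single (0 : Fin (2 * M + 1)) 1 : Fin (2 * M + 1) → ℂ) =
      Complex.exp (Complex.I * φ) • (Pi.single (Fin.last (2 * M)) 1 : Fin (2 * M + 1) → ℂ))
    (Jt : ℕ → ℝ)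
    (hJt : ∀ k, Jt k =
      if k = M - 1 then Real.sqrt 2 * Real.cos θ * J k
      else if k = M then Real.sqrt 2 * Real.sin θ * J k
      else J k)
    (Ht : Matrix (Fin (2 * M + 1)) (Fin (2 * M + 1)) ℂ)
    (hHt : ∀ i j : Fin (2 * M + 1), Ht i j =
      if (i : ℕ) + 1 = (j : ℕ) then (Jt i : ℂ)
      else if (j : ℕ) + 1 = (i : ℕ) then (Jt j : ℂ) else 0) :
    ∃ φ' : ℝ,
      (NormedSpace.exp ((-(Complex.I * t₀)) • Ht)) *ᵥ
          (Pi.single (0 : Fin (2 * M + 1)) 1 : Fin (2 * M + 1) → ℂ) =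
        Complex.exp (Complex.I * φ') •
          ((Real.cos (2 * θ) : ℂ) • (Pi.single (0 : Fin (2 * M + 1)) 1 : Fin (2 * M + 1) → ℂ) +
           (Real.sin (2 * θ) : ℂ) • (Pi.single (Fin.last (2 * M)) 1 : Fin (2 * M + 1) → ℂ)) := by
  obtain ⟨hab, hsum, hdiff, hcos, hsin⟩ := cos_sin_add_pi_div_four_identities
    (a := Real.cos (θ + Real.pi / 4)) (b := Real.sin (θ + Real.pi / 4)) rfl rfl
  set U := mirrorMix M (Real.cos (θ + Real.pi / 4)) (Real.sin (θ + Real.pi / 4))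
  have hJ (k l : ℕ) (hkl : k + l + 1 = 2 * M) : J k = J l := by
    rw [hJsym k (by omega)]; congr 1; omega
  have hH' : H = jacobiMatrix _ J := Matrix.ext hH
  have hconj : Ht = U * H * U := by
    rw [show Ht = jacobiMatrix _ Jt from Matrix.ext hHt, hH',
      ← jacobiMatrix_mul_mirrorMix hab hJ (Jt := Jt) (fun k => by rw [hJt, hsum, hdiff]),
      mul_assoc, mirrorMix_mul_self hab, mul_one]
  have hmirror : Commute H (mirrorMix M 0 1) := by
    rw [hH']
    exact jacobiMatrix_mul_mirrorMix (by norm_num) hJ (fun k => by simp)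
  have hPST' := mulVec_eq_smul_of_commute ((hmirror.smul_left (-(Complex.I * t₀))).exp_left)
    (by simpa using mirrorMix_mulVec_single_zero (a := 0) (b := 1) hM)
    (by simpa using mirrorMix_mulVec_single_last (a := 0) (b := 1) hM) hPST
  refine ⟨φ, ?_⟩
  rw [hconj, ← smul_mul_assoc, ← mul_smul_comm,
    exp_conj_of_mul_self_eq_one (mirrorMix_mul_self hab),
    mul_mul_mulVec_of_swap (mirrorMix_mulVec_single_zero hM) (mirrorMix_mulVec_single_last hM)
      hPST hPST']
  simp only [← hcos, ← hsin, Complex.ofReal_mul, Complex.ofReal_sub, Complex.ofReal_pow,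
    Complex.ofReal_ofNat]

/-- Fractional revival: for an odd-length `N = 2M+1` mirror-symmetric field-free
tridiagonal chain with PST at `t₀`, replacing the two central couplings
`J_{(N−1)/2} → √2 cos θ · J_{(N−1)/2}`, `J_{(N+1)/2} → √2 sin θ · J_{(N+1)/2}` yields a
chain `H̃` with `e^{-iH̃t₀}|1⟩ = e^{iφ'}(cos 2θ |1⟩ + sin 2θ |N⟩)` up to a phase `φ'`. -/
theorem stmt17 (M : ℕ) (hM : 1 ≤ M) (t₀ φ θ : ℝ) (ht₀ : 0 < t₀)
    (hθ : 0 < θ ∧ θ < Real.pi / 2)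
    (J : ℕ → ℝ)
    (hJpos : ∀ k, k + 1 < 2 * M + 1 → 0 < J k)
    (hJsym : ∀ k, k + 1 < 2 * M + 1 → J k = J (2 * M - 1 - k))
    (H : Matrix (Fin (2 * M + 1)) (Fin (2 * M + 1)) ℂ)
    (hH : ∀ i j : Fin (2 * M + 1), H i j =
      if (i : ℕ) + 1 = (j : ℕ) then (J i : ℂ)
      else if (j : ℕ) + 1 = (i : ℕ) then (J j : ℂ) else 0)
    (hPST : (NormedSpace.exp ((-(Complex.I * t₀)) • H)) *ᵥ
        (Pi.single (0 : Fin (2 * M + 1)) 1 : Fin (2 * M + 1) → ℂ) =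
      Complex.exp (Complex.I * φ) • (Pi.single (Fin.last (2 * M)) 1 : Fin (2 * M + 1) → ℂ))
    (Jt : ℕ → ℝ)
    (hJt : ∀ k, Jt k =
      if k = M - 1 then Real.sqrt 2 * Real.cos θ * J k
      else if k = M then Real.sqrt 2 * Real.sin θ * J k
      else J k)
    (Ht : Matrix (Fin (2 * M + 1)) (Fin (2 * M + 1)) ℂ)
    (hHt : ∀ i j : Fin (2 * M + 1), Ht i j =
      if (i : ℕ) + 1 = (j : ℕ) then (Jt i : ℂ)
      else if (j : ℕ) + 1 = (i : ℕ) then (Jt j : ℂ) else 0) :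
    ∃ φ' : ℝ,
      (NormedSpace.exp ((-(Complex.I * t₀)) • Ht)) *ᵥ
          (Pi.single (0 : Fin (2 * M + 1)) 1 : Fin (2 * M + 1) → ℂ) =
        Complex.exp (Complex.I * φ') •
          ((Real.cos (2 * θ) : ℂ) • (Pi.single (0 : Fin (2 * M + 1)) 1 : Fin (2 * M + 1) → ℂ) +
           (Real.sin (2 * θ) : ℂ) • (Pi.single (Fin.last (2 * M)) 1 : Fin (2 * M + 1) → ℂ)) :=
  stmt17_general M hM t₀ φ θ J hJsym H hH hPST Jt hJt Ht hHt
end
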